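/- arXiv:1110.1961 — 9 statements merged into one kernel-verified Lean document; each statement's English description precedes it below -/
import Mathlib

section
/- Let A be a finite subset of an abelian group G with |A| ≥ 3. Then the set 2∧A of sums of two distinct elements of A satisfies |2∧A| < |A| if and only if A is a coset of an elementary 2-subgroup of G (a 2-coset). -/
open Finset Pointwise

/-- The set of sums of `k` distinct elements of `A`. -/
def nSum {G : Type*} [AddCommGroup G] [DecidableEq G] (k : ℕ) (A : Finset G) : Finset G :=
  (A.powersetCard k).image fun B => B.sum id

/-- `A` is a coset of an elementary 2-subgroup of `G`. -/
def Is2Coset {G : Type*} [AddCommGroup G] (A : Finset G) : Prop :=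
  ∃ (H : AddSubgroup G) (g : G), (∀ x ∈ H, x + x = 0) ∧ (A : Set G) = g +ᵥ (H : Set G)

lemma mem_nSum_two {G : Type*} [AddCommGroup G] [DecidableEq G] {A : Finset G} {a b : G}
    (ha : a ∈ A) (hb : b ∈ A) (hab : a ≠ b) : a + b ∈ nSum 2 A := by
  refine Finset.mem_image.2 ⟨{a, b}, ?_, ?_⟩
  · rw [Finset.mem_powersetCard]
    exact ⟨by simp [Finset.insert_subset_iff, ha, hb], Finset.card_pair hab⟩
  · simp [Finset.sum_pair hab]

lemma nSum_two_elim {G : Type*} [AddCommGroup G] [DecidableEq G] {A : Finset G} {x : G}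
    (hx : x ∈ nSum 2 A) : ∃ a ∈ A, ∃ b ∈ A, a ≠ b ∧ x = a + b := by
  obtain ⟨B, hB, rfl⟩ := Finset.mem_image.1 hx
  rw [Finset.mem_powersetCard] at hB
  obtain ⟨a, b, hab, rfl⟩ := Finset.card_eq_two.1 hB.2
  exact ⟨a, hB.1 (by simp), b, hB.1 (by simp), hab, by simp [Finset.sum_pair hab]⟩

theorem stmt0 {G : Type*} [AddCommGroup G] [DecidableEq G] (A : Finset G)
    (hA : 3 ≤ A.card) :
    (nSum 2 A).card < A.card ↔ Is2Coset A := by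
  constructor
  · intro hcard
    have key : ∀ a ∈ A, nSum 2 A = (A.erase a).image (a + ·) := by
      intro a ha
      have hsub : (A.erase a).image (a + ·) ⊆ nSum 2 A := by
        intro x hx
        obtain ⟨b, hb, rfl⟩ := Finset.mem_image.1 hx
        exact mem_nSum_two ha (Finset.mem_of_mem_erase hb)
          (Ne.symm (Finset.ne_of_mem_erase hb))
      have hc2 : ((A.erase a).image (a + ·)).card = A.card - 1 := by
        rw [Finset.card_image_of_injective _ (add_right_injective a),
          Finset.card_erase_of_mem ha]
      symm
      apply Finset.eq_of_subset_of_card_le hsub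
      omega
    obtain ⟨a0, ha0⟩ : A.Nonempty := Finset.card_pos.1 (by omega)
    -- shifting sums of distinct elements
    have P1 : ∀ a ∈ A, ∀ b ∈ A, a ≠ b → ∃ c ∈ A, c ≠ a0 ∧ a0 + c = a + b := by
      intro a ha b hb hab
      have h := mem_nSum_two ha hb hab
      rw [key a0 ha0] at h
      obtain ⟨c, hc, hce⟩ := Finset.mem_image.1 h
      exact ⟨c, Finset.mem_of_mem_erase hc, Finset.ne_of_mem_erase hc, hce⟩
    have P3 : ∀ a ∈ A, a + a ∉ nSum 2 A := by
      intro a ha h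
      rw [key a ha] at h
      obtain ⟨c, hc, hce⟩ := Finset.mem_image.1 h
      exact Finset.ne_of_mem_erase hc (add_left_cancel hce)
    -- star : squares are constant
    have hstar : ∀ a ∈ A, a + a = a0 + a0 := by
      intro a ha
      by_contra h2a
      have haa0 : a ≠ a0 := fun h => h2a (by rw [h])
      obtain ⟨b, hb⟩ : ((A.erase a).erase a0).Nonempty := by
        apply Finset.card_pos.1
        rw [Finset.card_erase_of_mem (Finset.mem_erase.2 ⟨Ne.symm haa0, ha0⟩),
          Finset.card_erase_of_mem ha]
        omega
      have hba0 : b ≠ a0 := Finset.ne_of_mem_erase hb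
      have hba : b ≠ a := Finset.ne_of_mem_erase (Finset.mem_of_mem_erase hb)
      have hbA : b ∈ A := Finset.mem_of_mem_erase (Finset.mem_of_mem_erase hb)
      obtain ⟨c, hcA, hca0, hce⟩ := P1 a ha b hbA (Ne.symm hba)
      have hca : c ≠ a := by
        rintro rfl
        have h' : c + a0 = c + b := by rw [← hce]; abel
        exact hba0 (add_left_cancel h').symm
      -- a + c ∈ nSum, use key b
      have h2 := mem_nSum_two ha hcA (Ne.symm hca)
      rw [key b hbA] at h2
      obtain ⟨d, hd, hde⟩ := Finset.mem_image.1 h2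
      have hdA : d ∈ A := Finset.mem_of_mem_erase hd
      have hc' : c = a + b - a0 := by rw [eq_sub_iff_add_eq, add_comm]; exact hce
      have hd' : d = a + c - b := by rw [eq_sub_iff_add_eq, add_comm]; exact hde
      have h3 : a0 + d = a + a := by rw [hd', hc']; abel
      have ha0d : a0 ≠ d := by
        rintro rfl
        exact h2a (by rw [← h3])
      exact P3 a ha (h3 ▸ mem_nSum_two ha0 hdA ha0d)
    have hclosure : ∀ a ∈ A, ∀ b ∈ A, ∃ c ∈ A, a0 + c = a + b := by
      intro a ha b hb
      rcases eq_or_ne a b with rfl | hab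
      · exact ⟨a0, ha0, (hstar a ha).symm⟩
      · obtain ⟨c, hcA, _, hce⟩ := P1 a ha b hb hab
        exact ⟨c, hcA, hce⟩
    refine ⟨{ carrier := {x | a0 + x ∈ A}
              zero_mem' := by simpa using ha0
              add_mem' := ?_
              neg_mem' := ?_ }, a0, ?_, ?_⟩
    · intro x y hx hy
      obtain ⟨c, hcA, hce⟩ := hclosure _ hx _ hy
      have : a0 + (x + y) = c := by
        apply add_left_cancel (a := a0)
        rw [hce]; abel
      simpa [Set.mem_setOf_eq, this] using hcA
    · intro x hx
      have hxx : x + x = 0 := by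
        have h := hstar _ hx
        apply add_left_cancel (a := a0 + a0)
        rw [add_zero]
        rw [show a0 + a0 + (x + x) = (a0 + x) + (a0 + x) by abel, h]
      have : -x = x := neg_eq_of_add_eq_zero_left hxx
      simpa [Set.mem_setOf_eq, this] using hx
    · intro x hx
      have h := hstar _ hx
      apply add_left_cancel (a := a0 + a0)
      rw [add_zero]
      rw [show a0 + a0 + (x + x) = (a0 + x) + (a0 + x) by abel, h]
    · ext x
      simp only [Finset.coe_sort_coe, Finset.mem_coe, Set.mem_vadd_set]
      constructor
      · intro hx
        refine ⟨x - a0, ?_, by simp [vadd_eq_add]⟩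
        show a0 + (x - a0) ∈ A
        simpa using hx
      · rintro ⟨h, hh, rfl⟩
        exact hh
  · rintro ⟨H, g, h2, hset⟩
    have hg : g ∈ A := by
      rw [← Finset.mem_coe, hset]
      exact ⟨0, H.zero_mem, by simp⟩
    have hsub : nSum 2 A ⊆ (A.erase g).image (g + ·) := by
      intro x hx
      obtain ⟨a, ha, b, hb, hab, rfl⟩ := nSum_two_elim hx
      have haH : ∃ h1 ∈ H, g + h1 = a := by
        have := (hset ▸ (Finset.mem_coe.2 ha) : (a : G) ∈ g +ᵥ (H : Set G))
        obtain ⟨h1, hh1, he⟩ := this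
        exact ⟨h1, hh1, he⟩
      have hbH : ∃ h1 ∈ H, g + h1 = b := by
        have := (hset ▸ (Finset.mem_coe.2 hb) : (b : G) ∈ g +ᵥ (H : Set G))
        obtain ⟨h1, hh1, he⟩ := this
        exact ⟨h1, hh1, he⟩
      obtain ⟨h1, hh1, rfl⟩ := haH
      obtain ⟨h2', hh2, rfl⟩ := hbH
      have hsum : h1 + h2' ∈ H := H.add_mem hh1 hh2
      have hcA : g + (h1 + h2') ∈ A := by
        rw [← Finset.mem_coe, hset]
        exact ⟨h1 + h2', hsum, rfl⟩
      refine Finset.mem_image.2 ⟨g + (h1 + h2'), Finset.mem_erase.2 ⟨?_, hcA⟩, by abel⟩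
      intro h
      have h0 : h1 + h2' = 0 := by
        have := add_left_cancel (a := g) (b := h1 + h2') (c := 0) (by rw [add_zero]; exact h)
        exact this
      have : h2' = h1 := by
        have hn : -h1 = h1 := neg_eq_of_add_eq_zero_left (h2 h1 hh1)
        rw [← hn]
        have h0' : h2' + h1 = 0 := by rw [add_comm]; exact h0
        exact (neg_eq_of_add_eq_zero_left h0').symm
      exact hab (by rw [this])
    calc (nSum 2 A).card ≤ ((A.erase g).image (g + ·)).card := Finset.card_le_card hsub
      _ ≤ (A.erase g).card := Finset.card_image_le
      _ < A.card := by rw [Finset.card_erase_of_mem hg]; omega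
end

section
/- If A is a coset of an elementary 2-subgroup of an abelian group G with |A| ≥ 3, then the set of sums of two distinct elements of A has cardinality exactly |A| − 1. -/
open Finset Pointwise

/-- The set of sums of two distinct elements of `A`. -/
def twoSum {G : Type*} [AddCommGroup G] [DecidableEq G] (A : Finset G) : Finset G :=
  ((A ×ˢ A).filter fun p => p.1 ≠ p.2).image fun p => p.1 + p.2

theorem stmt1 {G : Type*} [AddCommGroup G] [DecidableEq G] (A : Finset G)
    (hA : 3 ≤ A.card)
    (h2c : ∃ (H : AddSubgroup G) (g : G),
      (∀ x ∈ H, x + x = 0) ∧ (A : Set G) = g +ᵥ (H : Set G)) :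
    (twoSum A).card = A.card - 1 := by
  obtain ⟨H, g, h2, hAs⟩ := h2c
  have hm : ∀ a, a ∈ A ↔ -g + a ∈ H := by
    intro a
    rw [← Finset.mem_coe, hAs, Set.mem_vadd_set_iff_neg_vadd_mem]
    rfl
  have hg : g ∈ A := (hm g).2 (by simpa using H.zero_mem)
  have key : twoSum A = (A.image (fun a => a + g)).erase (g + g) := by
    ext x
    simp only [twoSum, Finset.mem_image, Finset.mem_filter, Finset.mem_product,
      Finset.mem_erase, Prod.exists]
    constructor
    · rintro ⟨a, b, ⟨⟨ha, hb⟩, hab⟩, rfl⟩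
      refine ⟨?_, a + b - g, ?_, by abel⟩
      · intro hx
        apply hab
        have h1 := (hm a).1 ha
        have h2b := (hm b).1 hb
        have e : (-g + a) + (-g + b) = 0 := by
          have : a + b = g + g := hx
          rw [show (-g + a) + (-g + b) = (a + b) - (g + g) by abel, this, sub_self]
        have e2 : -g + a = -(-g + b) := by
          rw [← neg_eq_of_add_eq_zero_right e, neg_neg]
        have e3 : -(-g + b) = -g + b := by
          have := h2 _ h2b
          have := neg_eq_of_add_eq_zero_right this
          rw [this]
        have : -g + a = -g + b := by rw [e2, e3]
        exact add_left_cancel this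
      · rw [hm]
        have h1 := (hm a).1 ha
        have h2b := (hm b).1 hb
        have : -g + (a + b - g) = (-g + a) + (-g + b) := by abel
        rw [this]
        exact H.add_mem h1 h2b
    · rintro ⟨hx, c, hc, rfl⟩
      refine ⟨g, c, ⟨⟨hg, hc⟩, ?_⟩, by abel⟩
      intro h
      exact hx (by rw [h])
  rw [key, Finset.card_erase_of_mem, Finset.card_image_of_injective _ (add_left_injective g)]
  exact Finset.mem_image.2 ⟨g, hg, rfl⟩
end

section
/- Let A be a finite subset of an abelian group G with |A| ≥ 5, and suppose A is not an almost 2-coset. Then |2∧A| ≤ |A| if and only if |A + A| = |A|. -/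
open Finset Pointwise

/-- `A` is a 2-coset with exactly one element removed. -/
def IsAlmost2Coset {G : Type*} [AddCommGroup G] (A : Finset G) : Prop :=
  ∃ (H : AddSubgroup G) (g a : G), (∀ x ∈ H, x + x = 0) ∧
    a ∈ (g +ᵥ (H : Set G)) ∧ (A : Set G) = (g +ᵥ (H : Set G)) \ {a}

/-!
If some double `a + a` lies in `2∧A`, then `a + A ⊆ 2∧A`, so `2∧A = a + A` and `B = A - a` is a set
containing `0` and closed under sums of distinct elements. For `p ∈ B` with `2p ∉ B`, the translate
`p + B` leaves `B` only at `2p`, so it misses exactly one element `u` of `B`, and comparing the sums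
of the elements of `B` and `p + B` gives `u + |B| p = 2p`. Playing these relations off against each
other for a few elements (there are enough of them when `|B| ≥ 5`) forces `2p = 0 ∈ B`. Hence `B`
is closed under addition and `A + A = 2a + (B + B) ⊆ a + A`.

Otherwise `a + (A \ {a}) ⊆ 2∧A` for every `a`, so `|2∧A|` is `|A| - 1` or `|A|`. In the first case
`2∧A = a + (A \ {a})` for every `a`, which forces all doubles to coincide, and then
`A + A = 2∧A ∪ {2a}`. In the second case `B = A - a` satisfies `2∧B = (B \ {0}) ∪ {σ}`. If `B` has a
nonzero element `g` of order two, every element `x` of larger order satisfies `2x + g = σ`, which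
pins `B` down to at most four elements. If it has none, then for each `x ≠ 0` at most one `t ≠ 0`
has `t - x ∉ B`, while for every pair `x ≠ t` one of `t - x`, `x - t` lies outside `B`, which again
bounds `|B|`. So every element of `B` has order at most two, `B ∪ {σ}` is an elementary 2-subgroup,
and `A` is a translate of it with one point removed.
-/

theorem Finset.card_le_three_of_forall_or_of_card_filter_le_one {α : Type*} [DecidableEq α]
    (N : Finset α) (R : α → α → Prop) [DecidableRel R]
    (hout : ∀ x ∈ N, #(N.filter (R x)) ≤ 1) (htot : ∀ x ∈ N, ∀ y ∈ N, x ≠ y → R x y ∨ R y x) :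
    #N ≤ 3 := by
  set P := N.offDiag.filter fun p => R p.1 p.2
  have hP : #P ≤ #N := by
    have hsub : P ⊆ N.biUnion fun x => (N.filter (R x)).image (Prod.mk x) := by
      intro p hp
      simp only [P, mem_filter, mem_offDiag] at hp
      exact mem_biUnion.2 ⟨p.1, hp.1.1, mem_image.2 ⟨p.2, mem_filter.2 ⟨hp.1.2.1, hp.2⟩, rfl⟩⟩
    calc #P ≤ ∑ x ∈ N, #((N.filter (R x)).image (Prod.mk x)) :=
          (card_le_card hsub).trans card_biUnion_le
      _ ≤ ∑ _x ∈ N, 1 := sum_le_sum fun x hx => card_image_le.trans (hout x hx)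
      _ = #N := by rw [sum_const, smul_eq_mul, mul_one]
  have hoff : N.offDiag ⊆ P ∪ P.image Prod.swap := by
    rintro ⟨x, y⟩ hxy
    obtain ⟨hx, hy, hne⟩ := mem_offDiag.1 hxy
    rcases htot x hx y hy hne with h | h
    · exact mem_union_left _ (mem_filter.2 ⟨hxy, h⟩)
    · refine mem_union_right _ (mem_image.2 ⟨(y, x), mem_filter.2 ⟨?_, h⟩, rfl⟩)
      exact mem_offDiag.2 ⟨hy, hx, hne.symm⟩
  have h := (card_le_card hoff).trans ((card_union_le _ _).trans (add_le_add_right card_image_le _))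
  rw [offDiag_card] at h
  have : #N * #N ≤ 3 * #N := by omega
  nlinarith

section

variable {G : Type*} [AddCommGroup G] [DecidableEq G]

theorem mem_vadd_finset_iff_sub_mem {B : Finset G} {x y : G} : y ∈ x +ᵥ B ↔ y - x ∈ B := by
  rw [← neg_vadd_mem_iff, vadd_eq_add, neg_add_eq_sub]

theorem add_card_nsmul_eq_of_sdiff_vadd_finset {B : Finset G} {x a u : G}
    (h₁ : (x +ᵥ B) \ B = {a}) (h₂ : B \ (x +ᵥ B) = {u}) : u + #B • x = a := by
  have hsum : ∑ y ∈ x +ᵥ B, y = ∑ y ∈ B, y + #B • x := by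
    rw [← image_vadd]
    simp only [vadd_eq_add]
    rw [sum_image (add_right_injective x).injOn, sum_add_distrib, sum_const, add_comm]
  have e₁ := sum_inter_add_sum_sdiff (x +ᵥ B) B id
  have e₂ := sum_inter_add_sum_sdiff B (x +ᵥ B) id
  rw [h₁, sum_singleton] at e₁
  rw [h₂, sum_singleton, inter_comm] at e₂
  apply add_left_cancel (a := ∑ y ∈ (x +ᵥ B) ∩ B, id y)
  simp only [id] at e₁ e₂ ⊢
  rw [e₁, hsum, ← e₂, add_assoc]

theorem mem_twoSum {A : Finset G} {s : G} :
    s ∈ twoSum A ↔ ∃ a ∈ A, ∃ b ∈ A, a ≠ b ∧ a + b = s := by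
  simp only [twoSum, mem_image, mem_filter, mem_product, Prod.exists]
  constructor
  · rintro ⟨a, b, ⟨⟨ha, hb⟩, hne⟩, rfl⟩
    exact ⟨a, ha, b, hb, hne, rfl⟩
  · rintro ⟨a, ha, b, hb, hne, rfl⟩
    exact ⟨a, b, ⟨⟨ha, hb⟩, hne⟩, rfl⟩

theorem add_mem_twoSum {A : Finset G} {a b : G} (ha : a ∈ A) (hb : b ∈ A) (hne : a ≠ b) :
    a + b ∈ twoSum A :=
  mem_twoSum.2 ⟨a, ha, b, hb, hne, rfl⟩

theorem twoSum_subset_add (A : Finset G) : twoSum A ⊆ A + A := by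
  intro s hs
  obtain ⟨a, ha, b, hb, -, rfl⟩ := mem_twoSum.1 hs
  exact add_mem_add ha hb

theorem twoSum_vadd (c : G) (A : Finset G) : twoSum (c +ᵥ A) = (c + c) +ᵥ twoSum A := by
  ext s
  simp only [mem_twoSum, mem_vadd_finset, vadd_eq_add]
  constructor
  · rintro ⟨_, ⟨a, ha, rfl⟩, _, ⟨b, hb, rfl⟩, hne, rfl⟩
    exact ⟨a + b, ⟨a, ha, b, hb, fun h => hne (by rw [h]), rfl⟩, by abel⟩
  · rintro ⟨_, ⟨a, ha, b, hb, hne, rfl⟩, rfl⟩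
    exact ⟨c + a, ⟨a, ha, rfl⟩, c + b, ⟨b, hb, rfl⟩, by simpa using hne, by abel⟩

theorem vadd_erase_subset_twoSum {A : Finset G} {a : G} (ha : a ∈ A) :
    a +ᵥ A.erase a ⊆ twoSum A := by
  intro s hs
  obtain ⟨b, hb, rfl⟩ := mem_vadd_finset.1 hs
  exact add_mem_twoSum ha (mem_of_mem_erase hb) (ne_of_mem_erase hb).symm

theorem card_le_card_twoSum_add_one (A : Finset G) : #A ≤ #(twoSum A) + 1 := by
  obtain rfl | ⟨a, ha⟩ := A.eq_empty_or_nonempty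
  · simp
  have := card_le_card (vadd_erase_subset_twoSum ha)
  rw [card_vadd_finset, card_erase_of_mem ha] at this
  omega

theorem add_self_eq_zero_of_mem_twoSum {B : Finset G} {s : G} (htor : ∀ c ∈ B, c + c = 0)
    (hs : s ∈ twoSum B) : s + s = 0 := by
  obtain ⟨p, hp, q, hq, -, rfl⟩ := mem_twoSum.1 hs
  rw [add_add_add_comm, htor p hp, htor q hq, add_zero]

theorem vadd_finset_sdiff_subset {B : Finset G} {x : G} (hx : x ∈ B) :
    (x +ᵥ B) \ B ⊆ insert (x + x) (twoSum B \ B) := by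
  intro s hs
  obtain ⟨hs, hsB⟩ := mem_sdiff.1 hs
  obtain ⟨y, hy, rfl⟩ := mem_vadd_finset.1 hs
  by_cases hyx : y = x
  · rw [hyx, vadd_eq_add]
    exact mem_insert_self _ _
  · exact mem_insert_of_mem (mem_sdiff.2 ⟨add_mem_twoSum hx hy (Ne.symm hyx), hsB⟩)

section DistinctSumClosed

variable {B : Finset G} {p q u : G}

theorem vadd_finset_eq_self_of_twoSum_subset (hB : twoSum B ⊆ B) (hp : p ∈ B) (hpp : p + p ∈ B) :
    p +ᵥ B = B := by
  refine eq_of_subset_of_card_le (fun s hs => ?_) (card_vadd_finset p B).ge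
  by_contra hsB
  have := vadd_finset_sdiff_subset hp (mem_sdiff.2 ⟨hs, hsB⟩)
  rw [sdiff_eq_empty_iff_subset.2 hB, insert_empty, mem_singleton] at this
  exact hsB (this ▸ hpp)

theorem vadd_finset_sdiff_eq_singleton (hB : twoSum B ⊆ B) (hp : p ∈ B) (hpp : p + p ∉ B) :
    (p +ᵥ B) \ B = {p + p} := by
  refine Subset.antisymm ?_ (singleton_subset_iff.2 (mem_sdiff.2 ⟨vadd_mem_vadd_finset hp, hpp⟩))
  simpa [sdiff_eq_empty_iff_subset.2 hB] using vadd_finset_sdiff_subset hp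

theorem exists_sdiff_vadd_finset_eq_singleton (hB : twoSum B ⊆ B) (hp : p ∈ B)
    (hpp : p + p ∉ B) : ∃ u, B \ (p +ᵥ B) = {u} :=
  card_eq_one.1 <| by
    rw [card_sdiff_comm (card_vadd_finset p B).symm, vadd_finset_sdiff_eq_singleton hB hp hpp,
      card_singleton]

theorem sub_mem_of_sdiff_vadd_finset_eq_singleton (hB : twoSum B ⊆ B) (hp : p ∈ B)
    (hpp : p + p ∉ B) (hu : B \ (p +ᵥ B) = {u}) (hq : q ∈ B) (hqp : q ≠ p) (hqu : q ≠ u) :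
    q - p ∈ B ∧ (q - p) + (q - p) ∉ B ∧ B \ ((q - p) +ᵥ B) = {p + q} := by
  have hr : q - p ∈ B := by
    rw [← mem_vadd_finset_iff_sub_mem]
    by_contra h
    have := mem_sdiff.2 ⟨hq, h⟩
    rw [hu, mem_singleton] at this
    exact hqu this
  have hpq : p + q ∈ B := hB (add_mem_twoSum hp hq hqp.symm)
  have hpq' : p + q ∉ (q - p) +ᵥ B := by
    rwa [mem_vadd_finset_iff_sub_mem, show p + q - (q - p) = p + p by abel]
  have hrr : (q - p) + (q - p) ∉ B := fun h =>
    hpq' (by rwa [vadd_finset_eq_self_of_twoSum_subset hB hr h])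
  obtain ⟨v, hv⟩ := exists_sdiff_vadd_finset_eq_singleton hB hr hrr
  have := mem_sdiff.2 ⟨hpq, hpq'⟩
  rw [hv, mem_singleton] at this
  exact ⟨hr, hrr, this ▸ hv⟩

theorem card_sub_one_zsmul_eq (hB : twoSum B ⊆ B) (hp : p ∈ B) (hpp : p + p ∉ B)
    (hu : B \ (p +ᵥ B) = {u}) (hq : q ∈ B) (hqp : q ≠ p) (hqu : q ≠ u) :
    ((#B : ℤ) - 1) • q = ((#B : ℤ) - 3) • p := by
  obtain ⟨hr, hrr, hv⟩ := sub_mem_of_sdiff_vadd_finset_eq_singleton hB hp hpp hu hq hqp hqu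
  have h := add_card_nsmul_eq_of_sdiff_vadd_finset (vadd_finset_sdiff_eq_singleton hB hr hrr) hv
  rw [← natCast_zsmul] at h
  rw [← sub_eq_zero, ← sub_eq_zero.2 h]
  module

theorem add_self_mem_of_twoSum_subset (hB : twoSum B ⊆ B) (h0 : 0 ∈ B) (hcard : 5 ≤ #B)
    {x : G} (hx : x ∈ B) : x + x ∈ B := by
  by_contra hxx
  obtain ⟨u, hu⟩ := exists_sdiff_vadd_finset_eq_singleton hB hx hxx
  obtain ⟨y, hy, hy'⟩ := exists_mem_notMem_of_card_lt_card (s := {x, u, 0}) (t := B)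
    (card_le_three.trans_lt (by omega))
  simp only [mem_insert, mem_singleton, not_or] at hy'
  obtain ⟨hyx, hyu, hy0⟩ := hy'
  obtain ⟨hz, hzz, hzu⟩ := sub_mem_of_sdiff_vadd_finset_eq_singleton hB hx hxx hu hy hyx hyu
  have hxz : x ≠ y - x := fun h => hxx (sub_eq_iff_eq_add.1 h.symm ▸ hy)
  have hxu : x ≠ x + y := fun h => hy0 (add_eq_left.1 h.symm)
  have e₁ := card_sub_one_zsmul_eq hB hz hzz hzu hx hxz hxu
  obtain ⟨w, hw, hw'⟩ := exists_mem_notMem_of_card_lt_card (s := {x, u, y - x, x + y}) (t := B)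
    (card_le_four.trans_lt (by omega))
  simp only [mem_insert, mem_singleton, not_or] at hw'
  obtain ⟨hwx, hwu, hwz, hwxy⟩ := hw'
  have e₂ := card_sub_one_zsmul_eq hB hx hxx hu hw hwx hwu
  have e₃ := card_sub_one_zsmul_eq hB hz hzz hzu hw hwz hwxy
  have h2x : (2 : ℤ) • x = 0 := by
    calc (2 : ℤ) • x = ((#B : ℤ) - 1) • x - ((#B : ℤ) - 3) • x := by module
      _ = 0 := by rw [e₁, e₂.symm.trans e₃, sub_self]
  rw [two_zsmul] at h2x
  exact hxx (h2x ▸ h0)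

theorem add_subset_of_twoSum_subset (hB : twoSum B ⊆ B) (h0 : 0 ∈ B) (hcard : 5 ≤ #B) :
    B + B ⊆ B := by
  intro s hs
  obtain ⟨a, ha, b, hb, rfl⟩ := mem_add.1 hs
  by_cases hab : a = b
  · exact hab ▸ add_self_mem_of_twoSum_subset hB h0 hcard ha
  · exact hB (add_mem_twoSum ha hb hab)

end DistinctSumClosed

theorem card_add_le_of_add_self_mem_twoSum {A : Finset G} {a : G} (hA : 5 ≤ #A) (ha : a ∈ A)
    (haa : a + a ∈ twoSum A) (hS : #(twoSum A) ≤ #A) : #(A + A) ≤ #A := by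
  have hsub : a +ᵥ A ⊆ twoSum A := by
    intro s hs
    obtain ⟨b, hb, rfl⟩ := mem_vadd_finset.1 hs
    by_cases hba : b = a
    · rwa [hba]
    · exact add_mem_twoSum ha hb (Ne.symm hba)
  have hSA : twoSum A = a +ᵥ A :=
    (eq_of_subset_of_card_le hsub (by rwa [card_vadd_finset])).symm
  have hB : twoSum (-a +ᵥ A) ⊆ -a +ᵥ A := by
    rw [twoSum_vadd, hSA, vadd_vadd, show -a + -a + a = -a by abel]
  have h0 : (0 : G) ∈ -a +ᵥ A := mem_neg_vadd_finset_iff.2 (by simpa using ha)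
  have hcard : #(-a +ᵥ A) = #A := card_vadd_finset _ _
  calc #(A + A) = #((a + a) +ᵥ ((-a +ᵥ A) + (-a +ᵥ A))) := by
        rw [← vadd_add_vadd_comm, vadd_vadd, add_neg_cancel, zero_vadd]
    _ ≤ #A := by
        rw [card_vadd_finset, ← hcard]
        exact card_le_card (add_subset_of_twoSum_subset hB h0 (hcard ▸ hA))

theorem card_add_le_of_card_twoSum_add_one_eq {A : Finset G} (hA : 3 ≤ #A)
    (hI : ∀ a ∈ A, a + a ∉ twoSum A) (hS : #(twoSum A) + 1 = #A) : #(A + A) ≤ #A := by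
  have hSb : ∀ b ∈ A, twoSum A = b +ᵥ A.erase b := fun b hb =>
    (eq_of_subset_of_card_le (vadd_erase_subset_twoSum hb)
      (by rw [card_vadd_finset, card_erase_of_mem hb]; omega)).symm
  have hshift : ∀ a ∈ A, ∀ b ∈ A, ∀ x ∈ A, x ≠ a → x + a - b ∈ A := by
    intro a ha b hb x hx hxa
    have h := add_mem_twoSum hx ha hxa
    rw [hSb b hb, mem_vadd_finset_iff_sub_mem] at h
    exact mem_of_mem_erase h
  have hdbl : ∀ a ∈ A, ∀ b ∈ A, a + a = b + b := by
    intro a ha b hb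
    by_contra hne
    obtain ⟨c, hc, hc'⟩ := exists_mem_notMem_of_card_lt_card (s := {a, b}) (t := A)
      (card_le_two.trans_lt (by omega))
    simp only [mem_insert, mem_singleton, not_or] at hc'
    have hd := hshift a ha b hb c hc hc'.1
    have hda : c + a - b ≠ a := fun h =>
      hc'.2 (add_right_cancel ((sub_eq_iff_eq_add.1 h).trans (add_comm a b)))
    have he := hshift a ha c hc _ hd hda
    rw [show c + a - b + a - c = a + a - b by abel] at he
    have := add_mem_twoSum he hb fun h => hne (sub_eq_iff_eq_add.1 h)
    rw [sub_add_cancel] at this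
    exact hI a ha this
  obtain ⟨a, ha⟩ : A.Nonempty := card_pos.1 (by omega)
  have hsub : A + A ⊆ insert (a + a) (twoSum A) := by
    intro s hs
    obtain ⟨x, hx, y, hy, rfl⟩ := mem_add.1 hs
    by_cases hxy : x = y
    · rw [← hxy, hdbl x hx a ha]
      exact mem_insert_self _ _
    · exact mem_insert_of_mem (add_mem_twoSum hx hy hxy)
  calc #(A + A) ≤ #(twoSum A) + 1 := (card_le_card hsub).trans (card_insert_le _ _)
    _ = #A := hS

section AlmostClosed

variable {B : Finset G} {σ g t x z : G}

theorem add_self_eq_zero_of_neg_mem (h0 : 0 ∈ B) (hdbl : ∀ c ∈ B, c + c ∉ twoSum B)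
    (hx : x ∈ B) (hnx : -x ∈ B) : x + x = 0 := by
  by_contra hxx
  have hne : x ≠ -x := fun h => hxx (by nth_rewrite 2 [h]; exact add_neg_cancel x)
  exact hdbl 0 h0 (by simpa using add_mem_twoSum hx hnx hne)

theorem add_self_notMem_of_ne_zero (h0 : 0 ∈ B) (hdbl : ∀ c ∈ B, c + c ∉ twoSum B)
    (hx : x ∈ B) (hxx : x + x ≠ 0) : x + x ∉ B := fun h =>
  hdbl x hx (by simpa using add_mem_twoSum h h0 hxx)

theorem add_eq_or_add_self_add_eq (hS : twoSum B ⊆ insert σ B)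
    (hdbl : ∀ c ∈ B, c + c ∉ twoSum B) (hx : x ∈ B) (hxx : x + x ≠ 0) (hz : z ∈ B)
    (hzz : z + z = 0) (hz0 : z ≠ 0) : x + z = σ ∨ x + x + z = σ := by
  have hxz : x ≠ z := fun h => hxx (by rwa [h])
  rcases mem_insert.1 (hS (add_mem_twoSum hx hz hxz)) with h | h
  · exact Or.inl h
  right
  have hne : x ≠ x + z := fun h' => hz0 (add_eq_left.1 h'.symm)
  rcases mem_insert.1 (hS (add_mem_twoSum hx h hne)) with h' | h'
  · rw [← h', add_assoc]
  · have hne' : x + (x + z) ≠ z := fun h'' => hxx (add_eq_right.1 (by rwa [← add_assoc] at h''))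
    have := add_mem_twoSum h' hz hne'
    rw [show x + (x + z) + z = x + x + (z + z) by abel, hzz, add_zero] at this
    exact absurd this (hdbl x hx)

theorem card_le_four_of_add_eq (h0 : 0 ∈ B) (hσ : σ ∉ B) (hS : twoSum B ⊆ insert σ B)
    (hdbl : ∀ c ∈ B, c + c ∉ twoSum B) (hx : x ∈ B) (hxx : x + x ≠ 0) (hz : z ∈ B)
    (hzz : z + z = 0) (hxz : x + z = σ) : #B ≤ 4 := by
  have hz0 : z ≠ 0 := by
    rintro rfl
    rw [add_zero] at hxz
    exact hσ (hxz ▸ hx)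
  have hbad : ∀ y ∈ B, y + y ≠ 0 → y = x := by
    intro y hy hyy
    rcases add_eq_or_add_self_add_eq hS hdbl hy hyy hz hzz hz0 with h | h
    · exact add_right_cancel (h.trans hxz.symm)
    · exact absurd (add_right_cancel (h.trans hxz.symm) ▸ hx)
        (add_self_notMem_of_ne_zero h0 hdbl hy hyy)
  have hsub : B ⊆ {x, 0, σ - x, σ - (x + x)} := by
    intro b hb
    simp only [mem_insert, mem_singleton]
    by_cases hbb : b + b = 0
    · by_cases hb0 : b = 0
      · exact Or.inr (Or.inl hb0)
      rcases add_eq_or_add_self_add_eq hS hdbl hx hxx hb hbb hb0 with h | h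
      · exact Or.inr (Or.inr (Or.inl (by rw [← h]; abel)))
      · exact Or.inr (Or.inr (Or.inr (by rw [← h]; abel)))
    · exact Or.inl (hbad b hb hbb)
  exact (card_le_card hsub).trans card_le_four

theorem add_self_add_eq_of_two_torsion (h0 : 0 ∈ B) (hσ : σ ∉ B) (hS : twoSum B ⊆ insert σ B)
    (hdbl : ∀ c ∈ B, c + c ∉ twoSum B) (hcard : 5 ≤ #B) (hg : g ∈ B) (hgg : g + g = 0)
    (hg0 : g ≠ 0) (hx : x ∈ B) (hxx : x + x ≠ 0) : x + x + g = σ :=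
  (add_eq_or_add_self_add_eq hS hdbl hx hxx hg hgg hg0).resolve_left fun h =>
    (card_le_four_of_add_eq h0 hσ hS hdbl hx hxx hg hgg h).not_gt hcard

theorem eq_zero_or_eq_of_two_torsion (h0 : 0 ∈ B) (hσ : σ ∉ B) (hS : twoSum B ⊆ insert σ B)
    (hdbl : ∀ c ∈ B, c + c ∉ twoSum B) (hcard : 5 ≤ #B) (hg : g ∈ B)
    (hgg : g + g = 0) (hg0 : g ≠ 0) (hx : x ∈ B) (hxx : x + x ≠ 0) (hz : z ∈ B)
    (hzz : z + z = 0) : z = 0 ∨ z = g := by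
  refine or_iff_not_imp_left.2 fun hz0 => ?_
  have hz' := add_self_add_eq_of_two_torsion h0 hσ hS hdbl hcard hz hzz hz0 hx hxx
  have hg' := add_self_add_eq_of_two_torsion h0 hσ hS hdbl hcard hg hgg hg0 hx hxx
  exact add_left_cancel (hz'.trans hg'.symm)

theorem add_eq_or_add_eq_of_two_torsion (h0 : 0 ∈ B) (hσ : σ ∉ B)
    (hS : twoSum B ⊆ insert σ B) (hdbl : ∀ c ∈ B, c + c ∉ twoSum B) (hcard : 5 ≤ #B)
    (hg : g ∈ B) (hgg : g + g = 0) (hg0 : g ≠ 0) (hx : x ∈ B) (hxx : x + x ≠ 0) (ht : t ∈ B)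
    (htt : t + t ≠ 0) (htx : t ≠ x) : x + t = g ∨ x + t = σ := by
  have hsum := add_mem_twoSum hx ht (Ne.symm htx)
  rcases mem_insert.1 (hS hsum) with h | h
  · exact Or.inr h
  by_cases hs : x + t + (x + t) = 0
  · rcases eq_zero_or_eq_of_two_torsion h0 hσ hS hdbl hcard hg hgg hg0 hx hxx h hs with h' | h'
    · rw [h', ← add_zero 0] at hsum
      exact absurd hsum (hdbl 0 h0)
    · exact Or.inl h'
  · have hxt' := add_self_add_eq_of_two_torsion h0 hσ hS hdbl hcard hg hgg hg0 h hs
    have hx' := add_self_add_eq_of_two_torsion h0 hσ hS hdbl hcard hg hgg hg0 hx hxx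
    have e := add_right_cancel (hxt'.trans hx'.symm)
    refine absurd (add_left_cancel (a := x + x) ?_) htt
    rw [add_zero]
    exact (by abel : x + x + (t + t) = x + t + (x + t)).trans e

theorem card_le_four_of_two_torsion_ne_zero (h0 : 0 ∈ B) (hσ : σ ∉ B)
    (hS : twoSum B ⊆ insert σ B) (hdbl : ∀ c ∈ B, c + c ∉ twoSum B) (hg : g ∈ B)
    (hgg : g + g = 0) (hg0 : g ≠ 0) (hx : x ∈ B) (hxx : x + x ≠ 0) : #B ≤ 4 := by
  by_contra! hcard
  replace hcard : 5 ≤ #B := hcard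
  have hB : B = {0, g, x, g - x, σ - x} := by
    refine eq_of_subset_of_card_le (fun b hb => ?_) (card_le_five.trans hcard)
    simp only [mem_insert, mem_singleton]
    by_cases hbb : b + b = 0
    · rcases eq_zero_or_eq_of_two_torsion h0 hσ hS hdbl hcard hg hgg hg0 hx hxx hb hbb with h | h
      · exact Or.inl h
      · exact Or.inr (Or.inl h)
    by_cases hbx : b = x
    · exact Or.inr (Or.inr (Or.inl hbx))
    rcases add_eq_or_add_eq_of_two_torsion h0 hσ hS hdbl hcard hg hgg hg0 hx hxx hb hbb hbx with
      h | h
    · exact Or.inr (Or.inr (Or.inr (Or.inl (by rw [← h]; abel))))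
    · exact Or.inr (Or.inr (Or.inr (Or.inr (by rw [← h]; abel))))
  have h₁ : g - x ∈ B := by rw [hB]; simp
  have h₂ : σ - x ∈ B := by rw [hB]; simp
  have := add_mem_twoSum h₁ h₂ fun h => hσ (sub_left_inj.1 h ▸ hg)
  rw [← add_self_add_eq_of_two_torsion h0 hσ hS hdbl hcard hg hgg hg0 hx hxx,
    show g - x + (x + x + g - x) = g + g by abel, hgg, ← add_zero 0] at this
  exact hdbl 0 h0 this

theorem card_sdiff_vadd_finset_le_two (hS : twoSum B ⊆ insert σ B) (hx : x ∈ B) :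
    #(B \ (x +ᵥ B)) ≤ 2 := by
  have hσ : twoSum B \ B ⊆ {σ} := fun s hs =>
    mem_singleton.2 ((mem_insert.1 (hS (mem_sdiff.1 hs).1)).resolve_right (mem_sdiff.1 hs).2)
  rw [card_sdiff_comm (card_vadd_finset x B).symm]
  exact (card_le_card (vadd_finset_sdiff_subset hx)).trans
    ((card_insert_le _ _).trans (by simpa using card_le_card hσ))

theorem card_le_four_of_two_torsion_eq_zero (h0 : 0 ∈ B) (hS : twoSum B ⊆ insert σ B)
    (hdbl : ∀ c ∈ B, c + c ∉ twoSum B) (htor : ∀ z ∈ B, z + z = 0 → z = 0) : #B ≤ 4 := by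
  have hneg : ∀ x ∈ B, x ≠ 0 → -x ∉ B := fun x hx hx0 hnx =>
    hx0 (htor x hx (add_self_eq_zero_of_neg_mem h0 hdbl hx hnx))
  have hout : ∀ x ∈ B.erase 0, #((B.erase 0).filter fun t => t - x ∉ B) ≤ 1 := by
    intro x hx
    obtain ⟨hx0, hx⟩ := mem_erase.1 hx
    have h2 := card_sdiff_vadd_finset_le_two hS hx
    have h0mem : 0 ∈ B \ (x +ᵥ B) :=
      mem_sdiff.2 ⟨h0, by rw [mem_vadd_finset_iff_sub_mem, zero_sub]; exact hneg x hx hx0⟩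
    have hsub : (B.erase 0).filter (fun t => t - x ∉ B) ⊆ (B \ (x +ᵥ B)).erase 0 := by
      intro t ht
      simp only [mem_filter, mem_erase, mem_sdiff, mem_vadd_finset_iff_sub_mem] at ht ⊢
      tauto
    have := card_le_card hsub
    rw [card_erase_of_mem h0mem] at this
    omega
  have htot : ∀ x ∈ B.erase 0, ∀ t ∈ B.erase 0, x ≠ t → t - x ∉ B ∨ x - t ∉ B := by
    intro x _ t _ hxt
    by_contra! h
    have := add_self_eq_zero_of_neg_mem h0 hdbl h.1 (by rw [neg_sub]; exact h.2)
    exact hxt (sub_eq_zero.1 (htor _ h.1 this)).symm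
  have := (B.erase 0).card_le_three_of_forall_or_of_card_filter_le_one _ hout htot
  rw [card_erase_of_mem h0] at this
  omega

theorem add_self_eq_zero_of_twoSum_subset_insert (h0 : 0 ∈ B) (hσ : σ ∉ B)
    (hS : twoSum B ⊆ insert σ B) (hdbl : ∀ c ∈ B, c + c ∉ twoSum B) (hcard : 5 ≤ #B) :
    ∀ c ∈ B, c + c = 0 := by
  by_contra! hbad
  obtain ⟨x, hx, hxx⟩ := hbad
  by_cases hg : ∃ g ∈ B, g + g = 0 ∧ g ≠ 0
  · obtain ⟨g, hg, hgg, hg0⟩ := hg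
    have := card_le_four_of_two_torsion_ne_zero h0 hσ hS hdbl hg hgg hg0 hx hxx
    omega
  · push Not at hg
    have := card_le_four_of_two_torsion_eq_zero h0 hS hdbl hg
    omega

theorem add_mem_insert_of_add_self_eq_zero (h0 : 0 ∈ B) (hS : twoSum B ⊆ insert σ B)
    (htor : ∀ c ∈ B, c + c = 0) (hσS : σ ∈ twoSum B) :
    ∀ x ∈ insert σ B, ∀ y ∈ insert σ B, x + y ∈ insert σ B := by
  have hBB : ∀ x ∈ B, ∀ y ∈ B, x + y ∈ insert σ B := fun x hx y hy => by
    by_cases hxy : x = y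
    · rw [hxy, htor y hy]
      exact mem_insert_of_mem h0
    · exact hS (add_mem_twoSum hx hy hxy)
  obtain ⟨p, hp, q, hq, -, rfl⟩ := mem_twoSum.1 hσS
  have hBσ : ∀ x ∈ B, x + (p + q) ∈ insert (p + q) B := by
    intro x hx
    rcases mem_insert.1 (hBB x hx p hp) with h | h
    · rw [add_right_cancel (h.trans (add_comm p q)), add_left_comm, htor q hq, add_zero]
      exact mem_insert_of_mem hp
    · rw [← add_assoc]
      exact hBB _ h q hq
  intro x hx y hy
  rcases mem_insert.1 hx with rfl | hx <;> rcases mem_insert.1 hy with rfl | hy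
  · rw [add_add_add_comm, htor p hp, htor q hq, add_zero]
    exact mem_insert_of_mem h0
  · rw [add_comm (p + q) y]
    exact hBσ y hy
  · exact hBσ x hx
  · exact hBB x hx y hy

theorem isAlmost2Coset_of_insert (hσ : σ ∉ B) (h0 : 0 ∈ B)
    (hadd : ∀ x ∈ insert σ B, ∀ y ∈ insert σ B, x + y ∈ insert σ B)
    (htor : ∀ x ∈ insert σ B, x + x = 0) : IsAlmost2Coset B := by
  let H : AddSubgroup G :=
    { carrier := ↑(insert σ B)
      add_mem' := fun {x y} hx hy => hadd x hx y hy
      zero_mem' := mem_insert_of_mem h0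
      neg_mem' := fun {x} hx => by rwa [neg_eq_of_add_eq_zero_left (htor x hx)] }
  refine ⟨H, 0, σ, fun x hx => htor x hx, by simp [H], ?_⟩
  ext x
  simp only [zero_vadd, Set.mem_sdiff, Set.mem_singleton_iff, mem_coe, H, AddSubgroup.coe_set_mk,
    AddSubmonoid.coe_set_mk, AddSubsemigroup.coe_set_mk, coe_insert, Set.mem_insert_iff]
  constructor
  · exact fun hx => ⟨Or.inr hx, fun h => hσ (h ▸ hx)⟩
  · exact fun ⟨hx, hxσ⟩ => hx.resolve_left hxσ

theorem isAlmost2Coset_of_card_twoSum_eq_of_zero_mem (h0 : 0 ∈ B) (hcard : 5 ≤ #B)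
    (hdbl : ∀ c ∈ B, c + c ∉ twoSum B) (hS : #(twoSum B) = #B) : IsAlmost2Coset B := by
  have hsub : B.erase 0 ⊆ twoSum B := fun x hx => by
    simpa using add_mem_twoSum (mem_of_mem_erase hx) h0 (ne_of_mem_erase hx)
  obtain ⟨σ, hσ⟩ : ∃ σ, twoSum B \ B.erase 0 = {σ} :=
    card_eq_one.1 (by rw [card_sdiff_of_subset hsub, card_erase_of_mem h0]; omega)
  obtain ⟨hσS, hσB'⟩ := mem_sdiff.1 (hσ ▸ mem_singleton_self σ)
  have hσB : σ ∉ B := fun h =>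
    hσB' (mem_erase.2 ⟨fun h' => hdbl 0 h0 (by simpa [h'] using hσS), h⟩)
  have hS' : twoSum B ⊆ insert σ B := by
    intro s hs
    by_cases hs' : s ∈ B.erase 0
    · exact mem_insert_of_mem (mem_of_mem_erase hs')
    · have := mem_sdiff.2 ⟨hs, hs'⟩
      rw [hσ, mem_singleton] at this
      exact this ▸ mem_insert_self σ B
  have htor := add_self_eq_zero_of_twoSum_subset_insert h0 hσB hS' hdbl hcard
  refine isAlmost2Coset_of_insert hσB h0 (add_mem_insert_of_add_self_eq_zero h0 hS' htor hσS) ?_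
  intro x hx
  rcases mem_insert.1 hx with rfl | hx
  · exact add_self_eq_zero_of_mem_twoSum htor hσS
  · exact htor x hx

end AlmostClosed

theorem IsAlmost2Coset.vadd {B : Finset G} (h : IsAlmost2Coset B) (c : G) :
    IsAlmost2Coset (c +ᵥ B) := by
  obtain ⟨H, g, a, hH, ha, hB⟩ := h
  refine ⟨H, c + g, c + a, hH, ?_, ?_⟩
  · rw [← vadd_vadd]
    exact Set.vadd_mem_vadd_set ha
  · rw [coe_vadd_finset, hB, Set.vadd_set_sdiff, Set.vadd_set_singleton, vadd_vadd, vadd_eq_add]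

theorem isAlmost2Coset_of_card_twoSum_eq {A : Finset G} (hcard : 5 ≤ #A)
    (hdbl : ∀ a ∈ A, a + a ∉ twoSum A) (hS : #(twoSum A) = #A) : IsAlmost2Coset A := by
  obtain ⟨a, ha⟩ : A.Nonempty := card_pos.1 (by omega)
  have hA : A = a +ᵥ (-a +ᵥ A) := by rw [vadd_vadd, add_neg_cancel, zero_vadd]
  rw [hA]
  refine IsAlmost2Coset.vadd (isAlmost2Coset_of_card_twoSum_eq_of_zero_mem ?_ ?_ ?_ ?_) a
  · exact mem_neg_vadd_finset_iff.2 (by simpa using ha)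
  · rwa [card_vadd_finset]
  · intro c hc h
    rw [twoSum_vadd, mem_vadd_finset_iff_sub_mem] at h
    rw [mem_vadd_finset_iff_sub_mem] at hc
    exact hdbl _ hc (by rwa [show c - -a + (c - -a) = c + c - (-a + -a) by abel])
  · rw [twoSum_vadd, card_vadd_finset, card_vadd_finset, hS]

end

theorem stmt3 {G : Type*} [AddCommGroup G] [DecidableEq G] (A : Finset G)
    (hA : 5 ≤ A.card) (h : ¬ IsAlmost2Coset A) :
    (twoSum A).card ≤ A.card ↔ (A + A).card = A.card := by
  refine ⟨fun hle => le_antisymm ?_ (card_le_card_add_right (card_pos.1 (by omega))),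
    fun heq => (card_le_card (twoSum_subset_add A)).trans heq.le⟩
  by_cases hI : ∃ a ∈ A, a + a ∈ twoSum A
  · obtain ⟨a, ha, haa⟩ := hI
    exact card_add_le_of_add_self_mem_twoSum hA ha haa hle
  push Not at hI
  rcases (card_le_card_twoSum_add_one A).eq_or_lt with hS | hS
  · exact card_add_le_of_card_twoSum_add_one_eq (by omega) hI hS.symm
  · exact absurd (isAlmost2Coset_of_card_twoSum_eq hA hI (by omega)) h
end

section
/- Let A be a subset of an abelian group G with |A| = 4 and |2∧A| = 4. Then A is the union of two cosets of a subgroup of order 2. -/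
open Finset Pointwise

lemma mem_twoSum_s4 {G : Type*} [AddCommGroup G] [DecidableEq G] {A : Finset G} {x y : G}
    (hx : x ∈ A) (hy : y ∈ A) (hxy : x ≠ y) : x + y ∈ twoSum A := by
  simp only [twoSum, Finset.mem_image, Finset.mem_filter, Finset.mem_product]
  exact ⟨(x, y), ⟨⟨hx, hy⟩, hxy⟩, rfl⟩

lemma zmultiples_eq {G : Type*} [AddCommGroup G] {h : G} (h2 : h + h = 0) :
    ((AddSubgroup.zmultiples h : AddSubgroup G) : Set G) = {0, h} := by
  ext x
  constructor
  · rintro ⟨n, rfl⟩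
    rcases Int.even_or_odd n with ⟨k, rfl⟩ | ⟨k, rfl⟩
    · left
      have : (k + k) • h = k • (h + h) := by rw [add_smul, smul_add]
      simp [this, h2]
    · right
      have : (2 * k + 1) • h = k • (h + h) + h := by
        rw [add_smul, one_smul, two_mul, add_smul, smul_add]
      simp [this, h2]
  · rintro (rfl | hx)
    · exact zero_mem _
    · rw [Set.mem_singleton_iff] at hx
      rw [hx]
      exact AddSubgroup.mem_zmultiples _

lemma key {G : Type*} [AddCommGroup G] (a c h : G) (hh : h ≠ 0) (h2 : h + h = 0) :
    ∃ (H : AddSubgroup G) (g₁ g₂ : G), Nat.card H = 2 ∧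
      ({a, a + h, c, c + h} : Set G) = (g₁ +ᵥ (H : Set G)) ∪ (g₂ +ᵥ (H : Set G)) := by
  refine ⟨AddSubgroup.zmultiples h, a, c, ?_, ?_⟩
  · rw [Nat.card_zmultiples]
    exact addOrderOf_eq_prime (by rw [two_nsmul, h2]) hh
  · rw [zmultiples_eq h2]
    ext x
    simp only [Set.mem_insert_iff, Set.mem_union, Set.mem_vadd_set, Set.mem_singleton_iff]
    constructor
    · rintro (rfl | rfl | rfl | rfl)
      · exact Or.inl ⟨0, Or.inl rfl, by simp⟩
      · exact Or.inl ⟨h, Or.inr rfl, by rw [vadd_eq_add, add_comm]⟩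
      · exact Or.inr ⟨0, Or.inl rfl, by simp⟩
      · exact Or.inr ⟨h, Or.inr rfl, by rw [vadd_eq_add, add_comm]⟩
    · rintro (⟨y, (rfl | rfl), rfl⟩ | ⟨y, (rfl | rfl), rfl⟩) <;> simp [add_comm]

lemma neL {G : Type*} [AddCommGroup G] {x y z : G} (h : y ≠ z) : x + y ≠ x + z :=
  fun H => h (add_left_cancel H)

lemma neR {G : Type*} [AddCommGroup G] {x y z : G} (h : x ≠ z) : x + y ≠ z + y :=
  fun H => h (add_right_cancel H)

lemma neM {G : Type*} [AddCommGroup G] {x y z : G} (h : x ≠ z) : x + y ≠ y + z :=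
  fun H => h (by rw [add_comm x y] at H; exact add_left_cancel H)

lemma card5 {G : Type*} [DecidableEq G] {s : Finset G} {x1 x2 x3 x4 x5 : G}
    (h1 : x1 ∈ s) (h2 : x2 ∈ s) (h3 : x3 ∈ s) (h4 : x4 ∈ s) (h5 : x5 ∈ s)
    (d12 : x1 ≠ x2) (d13 : x1 ≠ x3) (d14 : x1 ≠ x4) (d15 : x1 ≠ x5)
    (d23 : x2 ≠ x3) (d24 : x2 ≠ x4) (d25 : x2 ≠ x5)
    (d34 : x3 ≠ x4) (d35 : x3 ≠ x5) (d45 : x4 ≠ x5) : 5 ≤ s.card := by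
  have hsub : ({x1, x2, x3, x4, x5} : Finset G) ⊆ s := by
    intro x hx
    simp only [Finset.mem_insert, Finset.mem_singleton] at hx
    rcases hx with rfl | rfl | rfl | rfl | rfl <;> assumption
  calc 5 = ({x1, x2, x3, x4, x5} : Finset G).card := by
        rw [Finset.card_insert_of_notMem (by simp [d12, d13, d14, d15]),
          Finset.card_insert_of_notMem (by simp [d23, d24, d25]),
          Finset.card_insert_of_notMem (by simp [d34, d35]),
          Finset.card_insert_of_notMem (by simp [d45]), Finset.card_singleton]
    _ ≤ s.card := Finset.card_le_card hsub

set_option maxHeartbeats 1600000 in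
theorem stmt4 {G : Type*} [AddCommGroup G] [DecidableEq G] (A : Finset G)
    (hA : A.card = 4) (h2 : (twoSum A).card = 4) :
    ∃ (H : AddSubgroup G) (g₁ g₂ : G), Nat.card H = 2 ∧
      (A : Set G) = (g₁ +ᵥ (H : Set G)) ∪ (g₂ +ᵥ (H : Set G)) := by
  rw [show (4 : ℕ) = 3 + 1 from rfl, Finset.card_eq_succ] at hA
  obtain ⟨a, t, hat, rfl, ht⟩ := hA
  obtain ⟨b, c, d, hbc, hbd, hcd, rfl⟩ := Finset.card_eq_three.mp ht
  simp only [Finset.mem_insert, not_or, Finset.mem_singleton] at hat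
  obtain ⟨hab, hac, had⟩ := hat
  have mem : ∀ x y : G, x ∈ ({a, b, c, d} : Finset G) → y ∈ ({a, b, c, d} : Finset G) →
      x ≠ y → x + y ∈ twoSum {a, b, c, d} := fun x y hx hy => mem_twoSum_s4 hx hy
  by_cases P1 : a + b = c + d <;> by_cases P2 : a + c = b + d <;> by_cases P3 : a + d = b + c
  · have hne : b - c ≠ 0 := sub_ne_zero.mpr hbc
    have h2h : (b - c) + (b - c) = 0 := by
      have e : (b - c) + (b - c) = ((a + b) - (c + d)) + ((b + d) - (a + c)) := by abel
      rw [e, P1, ← P2, sub_self, sub_self, add_zero]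
    have hb : b = c + (b - c) := by abel
    have hd : d = a + (b - c) := by
      have e : d - (a + (b - c)) = (c + d) - (a + b) := by abel
      rw [← P1, sub_self] at e
      exact sub_eq_zero.mp e
    obtain ⟨H, g1, g2, hH, hset⟩ := key a c (b - c) hne h2h
    refine ⟨H, g1, g2, hH, ?_⟩
    rw [← hset]
    ext x
    simp only [Finset.coe_insert, Set.mem_insert_iff, Finset.coe_singleton,
      Set.mem_singleton_iff, Finset.mem_coe, Finset.mem_insert, Finset.mem_singleton]
    rw [← hb, ← hd]
    tauto
  · have hne : b - c ≠ 0 := sub_ne_zero.mpr hbc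
    have h2h : (b - c) + (b - c) = 0 := by
      have e : (b - c) + (b - c) = ((a + b) - (c + d)) + ((b + d) - (a + c)) := by abel
      rw [e, P1, ← P2, sub_self, sub_self, add_zero]
    have hb : b = c + (b - c) := by abel
    have hd : d = a + (b - c) := by
      have e : d - (a + (b - c)) = (c + d) - (a + b) := by abel
      rw [← P1, sub_self] at e
      exact sub_eq_zero.mp e
    obtain ⟨H, g1, g2, hH, hset⟩ := key a c (b - c) hne h2h
    refine ⟨H, g1, g2, hH, ?_⟩
    rw [← hset]
    ext x
    simp only [Finset.coe_insert, Set.mem_insert_iff, Finset.coe_singleton,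
      Set.mem_singleton_iff, Finset.mem_coe, Finset.mem_insert, Finset.mem_singleton]
    rw [← hb, ← hd]
    tauto
  · have hne : d - b ≠ 0 := sub_ne_zero.mpr (fun e => hbd e.symm)
    have h2h : (d - b) + (d - b) = 0 := by
      have e : (d - b) + (d - b) = ((c + d) - (a + b)) + ((a + d) - (b + c)) := by abel
      rw [e, ← P1, P3, sub_self, sub_self, add_zero]
    have hd' : d = b + (d - b) := by abel
    have hc : c = a + (d - b) := by
      have e : c - (a + (d - b)) = (b + c) - (a + d) := by abel
      rw [← P3, sub_self] at e
      exact sub_eq_zero.mp e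
    obtain ⟨H, g1, g2, hH, hset⟩ := key a b (d - b) hne h2h
    refine ⟨H, g1, g2, hH, ?_⟩
    rw [← hset]
    ext x
    simp only [Finset.coe_insert, Set.mem_insert_iff, Finset.coe_singleton,
      Set.mem_singleton_iff, Finset.mem_coe, Finset.mem_insert, Finset.mem_singleton]
    rw [← hc, ← hd']
    tauto
  · have h5 : 5 ≤ (twoSum {a, b, c, d}).card :=
      card5 (mem a b (by simp) (by simp) hab) (mem a c (by simp) (by simp) hac)
        (mem a d (by simp) (by simp) had) (mem b c (by simp) (by simp) hbc)
        (mem b d (by simp) (by simp) hbd)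
        (neL hbc) (neL hbd) (neM hac) (neM had)
        (neL hcd) (neR hab) P2
        P3 (neR hab) (neL hcd)
    omega
  · have hne : c - d ≠ 0 := sub_ne_zero.mpr hcd
    have h2h : (c - d) + (c - d) = 0 := by
      have e : (c - d) + (c - d) = ((b + c) - (a + d)) + ((a + c) - (b + d)) := by abel
      rw [e, ← P3, P2, sub_self, sub_self, add_zero]
    have hc' : c = d + (c - d) := by abel
    have hb' : b = a + (c - d) := by
      have e : b - (a + (c - d)) = (b + d) - (a + c) := by abel
      rw [← P2, sub_self] at e
      exact sub_eq_zero.mp e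
    obtain ⟨H, g1, g2, hH, hset⟩ := key a d (c - d) hne h2h
    refine ⟨H, g1, g2, hH, ?_⟩
    rw [← hset]
    ext x
    simp only [Finset.coe_insert, Set.mem_insert_iff, Finset.coe_singleton,
      Set.mem_singleton_iff, Finset.mem_coe, Finset.mem_insert, Finset.mem_singleton]
    rw [← hb', ← hc']
    tauto
  · have h5 : 5 ≤ (twoSum {a, b, c, d}).card :=
      card5 (mem a b (by simp) (by simp) hab) (mem a c (by simp) (by simp) hac)
        (mem a d (by simp) (by simp) had) (mem b c (by simp) (by simp) hbc)
        (mem c d (by simp) (by simp) hcd)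
        (neL hbc) (neL hbd) (neM hac) P1
        (neL hcd) (neR hab) (neM had)
        P3 (neR hac) (neM hbd)
    omega
  · have h5 : 5 ≤ (twoSum {a, b, c, d}).card :=
      card5 (mem a b (by simp) (by simp) hab) (mem a c (by simp) (by simp) hac)
        (mem a d (by simp) (by simp) had) (mem b d (by simp) (by simp) hbd)
        (mem c d (by simp) (by simp) hcd)
        (neL hbc) (neL hbd) (neM had) P1
        (neL hcd) P2 (neM had)
        (neR hab) (neR hac) (neR hbc)
    omega
  · have h5 : 5 ≤ (twoSum {a, b, c, d}).card :=
      card5 (mem a b (by simp) (by simp) hab) (mem a c (by simp) (by simp) hac)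
        (mem a d (by simp) (by simp) had) (mem b c (by simp) (by simp) hbc)
        (mem b d (by simp) (by simp) hbd)
        (neL hbc) (neL hbd) (neM hac) (neM had)
        (neL hcd) (neR hab) P2
        P3 (neR hab) (neL hcd)
    omega
end

section
/- Let A and B be finite nonempty subsets of an abelian group G. Then |A + B| = |A| if and only if there is a subgroup H of G such that A is a union of cosets of H and B is contained in a single coset of H. -/
open Finset Pointwise

theorem stmt5 {G : Type*} [AddCommGroup G] [DecidableEq G] (A B : Finset G)
    (hA : A.Nonempty) (hB : B.Nonempty) :
    (A + B).card = A.card ↔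
      ∃ H : AddSubgroup G,
        (∀ a ∈ A, (a +ᵥ (H : Set G)) ⊆ (A : Set G)) ∧
        ∃ g : G, (B : Set G) ⊆ g +ᵥ (H : Set G) := by
  obtain ⟨b0, hb0⟩ := hB
  have htrans : ∀ b ∈ B, A + {b} = b +ᵥ A := by
    intro b _
    rw [Finset.add_singleton, op_vadd_eq_vadd]
  constructor
  · intro hcard
    have key : ∀ b ∈ B, b +ᵥ A = A + B := by
      intro b hb
      have hsub : A + {b} ⊆ A + B :=
        Finset.add_subset_add_left (Finset.singleton_subset_iff.2 hb)
      have hcard' : (A + B).card ≤ (A + {b}).card := by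
        rw [Finset.card_add_singleton, hcard]
      rw [← htrans b hb]
      exact Finset.eq_of_subset_of_card_le hsub hcard'
    refine ⟨AddAction.stabilizer G ((A : Set G)), ?_, b0, ?_⟩
    · intro a ha x hx
      obtain ⟨h, hh, rfl⟩ := hx
      have hstab : h +ᵥ (A : Set G) = A := AddAction.mem_stabilizer_iff.1 hh
      have : h + a ∈ h +ᵥ (A : Set G) := ⟨a, ha, rfl⟩
      rw [hstab] at this
      simpa [add_comm] using this
    · intro b hb
      refine ⟨-b0 + b, ?_, by simp [vadd_eq_add]⟩
      rw [SetLike.mem_coe, AddAction.mem_stabilizer_iff]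
      have h1 : b +ᵥ A = b0 +ᵥ A := by rw [key b hb, key b0 hb0]
      have h2 : ((-b0 + b) +ᵥ A : Finset G) = A := by
        rw [← vadd_vadd, h1, vadd_vadd, neg_add_cancel, zero_vadd]
      calc (-b0 + b) +ᵥ (A : Set G) = (((-b0 + b) +ᵥ A : Finset G) : Set G) :=
            (Finset.coe_vadd_finset _ _).symm
        _ = A := by rw [h2]
  · rintro ⟨H, hHA, g, hBg⟩
    have hsub : A + B ⊆ g +ᵥ A := by
      intro x hx
      obtain ⟨a, ha, b, hb, rfl⟩ := Finset.mem_add.1 hx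
      obtain ⟨h, hh, rfl⟩ := hBg hb
      have : a + h ∈ (A : Set G) := hHA a ha ⟨h, hh, rfl⟩
      have : a + h ∈ A := this
      refine Finset.mem_vadd_finset.2 ⟨a + h, this, ?_⟩
      simp [vadd_eq_add]; abel
    have h1 : (A + B).card ≤ A.card :=
      le_trans (Finset.card_le_card hsub) (le_of_eq (Finset.card_vadd_finset _ _))
    have h2 : A.card ≤ (A + B).card := by
      calc A.card = (A + {b0}).card := (Finset.card_add_singleton _ _).symm
        _ ≤ (A + B).card :=
            Finset.card_le_card (Finset.add_subset_add_left (Finset.singleton_subset_iff.2 hb0))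
    omega
end

section
/- Let a, n be positive integers with n ≥ 5 and a ≤ n/2, and let e₁, …, e_a be pairwise disjoint 2-element subsets of {1,…,n}. If U is chosen uniformly at random among subsets of {1,…,n} of cardinality ⌊(n+3)/2⌋, then the probability that U contains at least one of the pairs e₁, …, e_a is at least 2a/n, with equality if and only if a = n/2. -/
/-!
Write `k = ⌊(n + 3) / 2⌋` and let `X U` count the pairs `e i` contained in the `k`-set `U`.
If `a > n - k`, every `k`-set contains a pair: its complement has fewer than `a` points, so it
cannot meet all the disjoint pairs; the claim is then `2a ≤ n`, with equality iff `2a = n`.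
Otherwise `2a < n`, and the second moment method `P(X > 0) ≥ (E X)² / E X²` applies, with
`E X = a C(n-2, k-2) / C(n, k)` and `E X² = a (C(n-2, k-2) + (a-1) C(n-4, k-4)) / C(n, k)`.
For `k = ⌊(n + 3) / 2⌋` and `a ≤ n - k` this lower bound is strictly larger than `2a / n`.
-/

open Finset Function

namespace Nat

theorem add_two_mul_add_one_mul_choose_add_two (n k : ℕ) :
    (k + 2) * (k + 1) * (n + 2).choose (k + 2) = (n + 2) * (n + 1) * n.choose k := by
  calc (k + 2) * (k + 1) * (n + 2).choose (k + 2)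
      = (n + 2) * (n + 1).choose (k + 1) * (k + 1) := by
        rw [add_one_mul_choose_eq]; ring
    _ = (n + 2) * (n + 1) * n.choose k := by
        rw [mul_assoc, ← add_one_mul_choose_eq, mul_assoc]

theorem two_mul_choose_mul_lt {n k b : ℕ} (hk : 4 ≤ k) (hnk : n + 2 ≤ 2 * k)
    (hkn : 2 * k ≤ n + 3) (hb : b + k < n) :
    2 * n.choose k * ((n - 2).choose (k - 2) + b * (n - 4).choose (k - 4)) <
      n * (n - 2).choose (k - 2) ^ 2 := by
  obtain ⟨j, rfl⟩ : ∃ j, k = j + 4 := ⟨k - 4, by omega⟩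
  obtain ⟨N, rfl⟩ : ∃ N, n = N + 4 := ⟨n - 4, by omega⟩
  simp only [show j + 4 - 2 = j + 2 by omega, show N + 4 - 2 = N + 2 by omega,
    add_tsub_cancel_right]
  have A : (j + 4) * (j + 3) * (N + 4).choose (j + 4) =
      (N + 4) * (N + 3) * (N + 2).choose (j + 2) :=
    add_two_mul_add_one_mul_choose_add_two (N + 2) (j + 2)
  have B := add_two_mul_add_one_mul_choose_add_two N j
  have hpos : 0 < (N + 4) * (N + 2).choose (j + 2) * N.choose j :=
    Nat.mul_pos (Nat.mul_pos (by omega) (choose_pos (by omega))) (choose_pos (by omega))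
  -- Eliminating the binomials with `A` and `B` reduces the claim to this polynomial inequality.
  have hpoly : 2 * (N + 3) * ((N + 2) * (N + 1) + b * ((j + 2) * (j + 1))) <
      (j + 4) * (j + 3) * ((N + 2) * (N + 1)) := by
    obtain rfl | rfl : N = 2 * j + 1 ∨ N = 2 * j + 2 := by omega
    · have := Nat.mul_le_mul_right (2 * (2 * j + 4) * ((j + 2) * (j + 1)))
        (show b ≤ j by omega)
      ring_nf at this ⊢
      nlinarith [this]
    · have := Nat.mul_le_mul_right (2 * (2 * j + 5) * ((j + 2) * (j + 1)))
        (show b ≤ j + 1 by omega)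
      ring_nf at this ⊢
      nlinarith [this]
  refine Nat.lt_of_mul_lt_mul_right (a := (j + 4) * (j + 3) * ((j + 2) * (j + 1))) ?_
  calc 2 * (N + 4).choose (j + 4) * ((N + 2).choose (j + 2) + b * N.choose j) *
        ((j + 4) * (j + 3) * ((j + 2) * (j + 1)))
      = 2 * ((j + 4) * (j + 3) * (N + 4).choose (j + 4)) *
          ((j + 2) * (j + 1) * (N + 2).choose (j + 2) + b * ((j + 2) * (j + 1)) * N.choose j) := by
        ring
    _ = (N + 4) * (N + 2).choose (j + 2) * N.choose j *
          (2 * (N + 3) * ((N + 2) * (N + 1) + b * ((j + 2) * (j + 1)))) := by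
        rw [A, B]; ring
    _ < (N + 4) * (N + 2).choose (j + 2) * N.choose j *
          ((j + 4) * (j + 3) * ((N + 2) * (N + 1))) :=
        Nat.mul_lt_mul_of_pos_left hpoly hpos
    _ = (N + 4) * (N + 2).choose (j + 2) ^ 2 * ((j + 4) * (j + 3) * ((j + 2) * (j + 1))) := by
        linear_combination ((N + 4) * (N + 2).choose (j + 2) * ((j + 4) * (j + 3))) * B.symm

end Nat

theorem sq_sum_le_card_filter_ne_zero_mul_sum_sq {β : Type*} (s : Finset β) (f : β → ℕ) :
    (∑ x ∈ s, f x) ^ 2 ≤ #{x ∈ s | f x ≠ 0} * ∑ x ∈ s, f x ^ 2 := by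
  rw [← sum_filter_ne_zero]
  calc _ ≤ #{x ∈ s | f x ≠ 0} * ∑ x ∈ s with f x ≠ 0, f x ^ 2 :=
        sq_sum_le_card_mul_sum_sq
    _ ≤ _ := by gcongr; exact filter_subset _ _

variable {α ι : Type*} [DecidableEq α]

theorem card_filter_card_eq_and_subset [Fintype α] (t : Finset α) {k : ℕ} (htk : #t ≤ k) :
    #{U : Finset α | #U = k ∧ t ⊆ U} = (Fintype.card α - #t).choose (k - #t) := by
  rw [← card_compl, ← card_powersetCard]
  refine card_nbij' (· \ t) (· ∪ t) ?_ ?_ ?_ ?_ <;> intro U hU <;>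
    simp only [coe_filter, mem_univ, true_and, Set.mem_ofPred_eq, mem_coe, mem_powersetCard,
      subset_compl_iff_disjoint_right] at hU ⊢
  · exact ⟨sdiff_disjoint, by rw [card_sdiff_of_subset hU.2, hU.1]⟩
  · exact ⟨by rw [card_union_of_disjoint hU.1, hU.2]; omega, subset_union_right⟩
  · exact sdiff_union_of_subset hU.2
  · exact union_sdiff_cancel_right hU.1

theorem card_le_card_compl_of_forall_not_subset [Fintype α] [Fintype ι] {e : ι → Finset α}
    (hdisj : Pairwise (Disjoint on e)) {U : Finset α} (hU : ∀ i, ¬ e i ⊆ U) :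
    Fintype.card ι ≤ #Uᶜ := by
  choose x hxe hxU using fun i => not_subset.1 (hU i)
  rw [← card_univ]
  refine card_le_card_of_injOn x (fun i _ => by simpa using hxU i) fun i _ j _ hij => ?_
  by_contra hne
  exact disjoint_left.1 (hdisj hne) (hxe i) (hij ▸ hxe j)

section Moments

variable [Fintype ι]

theorem sum_card_filter_subset (S : Finset (Finset α)) (e : ι → Finset α) :
    ∑ U ∈ S, #{i | e i ⊆ U} = ∑ i, #{U ∈ S | e i ⊆ U} :=
  sum_card_bipartiteAbove_eq_sum_card_bipartiteBelow _

theorem sum_card_filter_subset_sq (S : Finset (Finset α)) (e : ι → Finset α) :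
    ∑ U ∈ S, #{i | e i ⊆ U} ^ 2 = ∑ i, ∑ j, #{U ∈ S | e i ∪ e j ⊆ U} := by
  have hsq (U : Finset α) : #{i | e i ⊆ U} ^ 2 = #{p : ι × ι | e p.1 ∪ e p.2 ⊆ U} := by
    rw [sq, ← card_product]
    congr 1
    ext p
    simp [union_subset_iff]
  simp_rw [hsq]
  rw [sum_card_filter_subset S fun p : ι × ι => e p.1 ∪ e p.2, Fintype.sum_prod_type]

variable [Fintype α] {r k : ℕ} {e : ι → Finset α}

theorem sum_card_filter_subset_of_card_eq (he : ∀ i, #(e i) = r) (hrk : r ≤ k) :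
    ∑ U with #U = k, #{i | e i ⊆ U} =
      Fintype.card ι * (Fintype.card α - r).choose (k - r) := by
  simp only [sum_card_filter_subset, filter_filter]
  simp [card_filter_card_eq_and_subset _ ((he _).trans_le hrk), he]

theorem sum_card_filter_subset_sq_of_card_eq (he : ∀ i, #(e i) = r)
    (hdisj : Pairwise (Disjoint on e)) (hrk : 2 * r ≤ k) :
    ∑ U with #U = k, #{i | e i ⊆ U} ^ 2 =
      Fintype.card ι * ((Fintype.card α - r).choose (k - r) +
        (Fintype.card ι - 1) * (Fintype.card α - 2 * r).choose (k - 2 * r)) := by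
  classical
  have hpair (i j : ι) : #{U : Finset α | #U = k ∧ e i ∪ e j ⊆ U} =
      if i = j then (Fintype.card α - r).choose (k - r)
      else (Fintype.card α - 2 * r).choose (k - 2 * r) := by
    split_ifs with hij
    · subst hij
      rw [union_self, card_filter_card_eq_and_subset _ (by rw [he]; omega), he]
    · have hcard : #(e i ∪ e j) = 2 * r := by
        rw [card_union_of_disjoint (hdisj hij), he, he, two_mul]
      rw [card_filter_card_eq_and_subset _ (by omega), hcard]
  simp only [sum_card_filter_subset_sq, filter_filter, hpair]
  simp [sum_ite, filter_eq, filter_ne, card_univ]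

end Moments

variable [Fintype α] [Fintype ι] {k : ℕ} {e : ι → Finset α}

theorem exists_subset_of_lt_card_add_card (hdisj : Pairwise (Disjoint on e)) {U : Finset α}
    (h : Fintype.card α < Fintype.card ι + #U) : ∃ i, e i ⊆ U := by
  by_contra! hnot
  have := card_le_card_compl_of_forall_not_subset hdisj hnot
  rw [card_compl] at this
  have := card_le_univ U
  omega

theorem two_mul_card_mul_card_lt_card_mul_card_filter_exists_subset (he : ∀ i, #(e i) = 2)
    (hdisj : Pairwise (Disjoint on e)) (hι : 0 < Fintype.card ι) (hk : 4 ≤ k)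
    (hαk : Fintype.card α + 2 ≤ 2 * k) (hkα : 2 * k ≤ Fintype.card α + 3)
    (hιk : Fintype.card ι + k ≤ Fintype.card α) :
    2 * Fintype.card ι * #{U : Finset α | #U = k} <
      Fintype.card α * #{U : Finset α | #U = k ∧ ∃ i, e i ⊆ U} := by
  set n := Fintype.card α
  set a := Fintype.card ι
  set c₂ := (n - 2).choose (k - 2)
  set X := c₂ + (a - 1) * (n - 4).choose (k - 4)
  have hS : #{U : Finset α | #U = k} = n.choose k := by simp [n]
  have hG : #{U ∈ {U : Finset α | #U = k} | #{i | e i ⊆ U} ≠ 0} =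
      #{U : Finset α | #U = k ∧ ∃ i, e i ⊆ U} := by
    rw [filter_filter]
    congr 1
    ext U
    simp
  have hCS : (a * c₂) ^ 2 ≤ #{U : Finset α | #U = k ∧ ∃ i, e i ⊆ U} * (a * X) := by
    have := sq_sum_le_card_filter_ne_zero_mul_sum_sq {U : Finset α | #U = k}
      fun U => #{i | e i ⊆ U}
    rwa [sum_card_filter_subset_of_card_eq he (by omega),
      sum_card_filter_subset_sq_of_card_eq he hdisj (by omega), hG] at this
  have hX : 0 < a * X := Nat.mul_pos hι (Nat.add_pos_left (Nat.choose_pos (by omega)) _)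
  have key := Nat.two_mul_choose_mul_lt hk hαk hkα (b := a - 1) (by omega)
  refine Nat.lt_of_mul_lt_mul_right (a := a * X) ?_
  calc 2 * a * #{U : Finset α | #U = k} * (a * X) = a ^ 2 * (2 * n.choose k * X) := by
        rw [hS]; ring
    _ < a ^ 2 * (n * c₂ ^ 2) := Nat.mul_lt_mul_of_pos_left key (by positivity)
    _ = n * (a * c₂) ^ 2 := by ring
    _ ≤ n * (#{U : Finset α | #U = k ∧ ∃ i, e i ⊆ U} * (a * X)) :=
        Nat.mul_le_mul_left _ hCS
    _ = _ := by ring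

theorem stmt6 (n a : ℕ) (hn : 5 ≤ n) (ha : 1 ≤ a) (han : 2 * a ≤ n)
    (e : Fin a → Finset (Fin n)) (hcard : ∀ i, (e i).card = 2)
    (hdisj : ∀ i j, i ≠ j → Disjoint (e i) (e j)) :
    2 * a * ((univ : Finset (Finset (Fin n))).filter
        (fun U => U.card = (n + 3) / 2)).card ≤
      n * ((univ : Finset (Finset (Fin n))).filter
        (fun U => U.card = (n + 3) / 2 ∧ ∃ i, e i ⊆ U)).card ∧
    (2 * a * ((univ : Finset (Finset (Fin n))).filter
        (fun U => U.card = (n + 3) / 2)).card =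
      n * ((univ : Finset (Finset (Fin n))).filter
        (fun U => U.card = (n + 3) / 2 ∧ ∃ i, e i ⊆ U)).card ↔ 2 * a = n) := by
  have hpw : Pairwise (Disjoint on e) := hdisj
  have := Fintype.card_fin n
  have := Fintype.card_fin a
  rcases lt_or_ge (n - (n + 3) / 2) a with hbig | hsmall
  · rw [filter_congr fun U _ => and_iff_left_of_imp fun hU =>
      exists_subset_of_lt_card_add_card hpw (by omega)]
    have hpos : 0 < #{U : Finset (Fin n) | #U = (n + 3) / 2} := by
      simpa using Nat.choose_pos (by omega)
    exact ⟨Nat.mul_le_mul_right _ han, Nat.eq_of_mul_eq_mul_right hpos, fun h => by rw [h]⟩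
  · have hlt := two_mul_card_mul_card_lt_card_mul_card_filter_exists_subset (k := (n + 3) / 2)
      hcard hpw (by omega) (by omega) (by omega) (by omega) (by omega)
    simp only [Fintype.card_fin] at hlt
    -- `convert` reconciles `Nat.decidableExistsFin`, used by the statement, with
    -- `Fintype.decidableExistsFintype`, used by the lemma.
    exact ⟨by convert Nat.le_of_lt hlt, fun h => absurd (by convert h) (Nat.ne_of_lt hlt),
      fun h => by omega⟩
end

section
/- Let n ≥ 5 and let c be a proper edge-colouring of the complete graph K_n. If c uses at least n colours, then there is a vertex subset U with |U| = ⌊(n+3)/2⌋ such that c uses at least n colours on the edges of the induced subgraph K_n[U]. -/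
/-!
Let `n = 2r + 2` or `n = 2r + 3`, so that a set `U` of size `⌊(n + 3)/2⌋` is the complement of
an `r`-set `O`; we average the number of colours on `Oᶜ` over all `r`-sets `O`. A colour class
with `a` edges is a matching, so `2a ≤ n` and `a ≤ r + 1`. The colour survives in `Oᶜ` unless
`O` covers all `a` edges. This is impossible if `a = r + 1`, and if `a ≤ r` there are at most
`2^a C(n-a, r-a) ≤ (1 - a/(r+1)) C(n, r)` covering sets. Hence each colour survives for at least
a fraction `a/(r+1)` of the sets `O`, and the average number of colours on `Oᶜ` is at least
`C(n,2)/(r+1) ≥ n - 1`. The inequality is strict: for odd `n` it reads `n > n - 1`; for even `n`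
pigeonhole gives a colour with at most `r` edges, for which the survival bound is strict.
-/

open Finset

section Binomial

theorem two_pow_mul_choose_succ {n r a : ℕ} (har : a < r) (hrn : r ≤ n) :
    (n - a) * (2 ^ (a + 1) * (n - (a + 1)).choose (r - (a + 1))) =
      2 * (r - a) * (2 ^ a * (n - a).choose (r - a)) := by
  obtain ⟨m, hm⟩ : ∃ m, n - a = m + 1 := ⟨n - (a + 1), by omega⟩
  obtain ⟨k, hk⟩ : ∃ k, r - a = k + 1 := ⟨r - (a + 1), by omega⟩
  rw [hm, hk, show n - (a + 1) = m by omega, show r - (a + 1) = k by omega]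
  calc (m + 1) * (2 ^ (a + 1) * m.choose k) = 2 ^ (a + 1) * ((m + 1) * m.choose k) := by ring
    _ = 2 ^ (a + 1) * ((m + 1).choose (k + 1) * (k + 1)) := by rw [Nat.add_one_mul_choose_eq]
    _ = 2 * (k + 1) * (2 ^ a * (m + 1).choose (k + 1)) := by ring

theorem mul_succ_mul_two_pow_mul_choose_succ_le {n r a : ℕ} (hrn : r ≤ n) (har : a < r)
    (ih : (r + 1) * (2 ^ a * (n - a).choose (r - a)) ≤ (r + 1 - a) * n.choose r) :
    (n - a) * ((r + 1) * (2 ^ (a + 1) * (n - (a + 1)).choose (r - (a + 1)))) ≤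
      2 * (r + 1 - a) * ((r - a) * n.choose r) :=
  calc _ = 2 * (r - a) * ((r + 1) * (2 ^ a * (n - a).choose (r - a))) := by
        rw [mul_left_comm, two_pow_mul_choose_succ har hrn]; ring
    _ ≤ 2 * (r - a) * ((r + 1 - a) * n.choose r) := by gcongr
    _ = _ := by ring

theorem succ_mul_two_pow_mul_choose_le {n r a : ℕ} (hn : 2 * r + 2 ≤ n) (ha : a ≤ r) :
    (r + 1) * (2 ^ a * (n - a).choose (r - a)) ≤ (r + 1 - a) * n.choose r := by
  induction a with
  | zero => simp
  | succ a ih =>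
    have hstep := mul_succ_mul_two_pow_mul_choose_succ_le (by omega) (by omega) (ih (by omega))
    refine Nat.le_of_mul_le_mul_left ?_ (by omega : 0 < n - a)
    calc _ ≤ 2 * (r + 1 - a) * ((r - a) * n.choose r) := hstep
      _ ≤ (n - a) * ((r - a) * n.choose r) := by gcongr; omega
      _ = _ := by rw [show r + 1 - (a + 1) = r - a by omega]

theorem succ_mul_two_pow_mul_choose_lt {n r a : ℕ} (hn : 2 * r + 2 ≤ n) (ha : 2 ≤ a)
    (har : a ≤ r) :
    (r + 1) * (2 ^ a * (n - a).choose (r - a)) < (r + 1 - a) * n.choose r := by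
  obtain ⟨b, rfl⟩ : ∃ b, a = b + 1 := ⟨a - 1, by omega⟩
  have hstep := mul_succ_mul_two_pow_mul_choose_succ_le (by omega) (by omega)
    (succ_mul_two_pow_mul_choose_le hn (a := b) (by omega))
  have hpos : 0 < (r - b) * n.choose r := Nat.mul_pos (by omega) (Nat.choose_pos (by omega))
  refine Nat.lt_of_mul_lt_mul_left (a := n - b) ?_
  calc _ ≤ 2 * (r + 1 - b) * ((r - b) * n.choose r) := hstep
    _ < (n - b) * ((r - b) * n.choose r) := Nat.mul_lt_mul_of_pos_right (by omega) hpos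
    _ = _ := by rw [show r + 1 - (b + 1) = r - b by omega]

theorem choose_lt_succ_mul_choose_sub_two {n r : ℕ} (hr : 2 ≤ r) (hn : 2 * r + 2 ≤ n) :
    n.choose r < (r + 1) * (n - 2).choose r := by
  obtain ⟨m, rfl⟩ : ∃ m, n = m + 2 := ⟨n - 2, by omega⟩
  have h₁ : m.choose r * (m + 1) = (m + 1).choose r * (m + 1 - r) := Nat.choose_mul_succ_eq m r
  have h₂ : (m + 1).choose r * (m + 2) = (m + 2).choose r * (m + 2 - r) :=
    Nat.choose_mul_succ_eq (m + 1) r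
  have hpoly : (m + 2) * (m + 1) < (r + 1) * ((m + 2 - r) * (m + 1 - r)) := by
    obtain ⟨k, rfl⟩ : ∃ k, m = 2 * r + k := ⟨m - 2 * r, by omega⟩
    obtain ⟨s, rfl⟩ : ∃ s, r = s + 2 := ⟨r - 2, by omega⟩
    rw [show 2 * (s + 2) + k + 2 - (s + 2) = s + 4 + k by omega,
      show 2 * (s + 2) + k + 1 - (s + 2) = s + 3 + k by omega]
    ring_nf
    nlinarith [Nat.zero_le (s * k), Nat.zero_le (s * s * k), Nat.zero_le (s * k * k)]
  rw [Nat.add_sub_cancel]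
  refine Nat.lt_of_mul_lt_mul_left (a := (m + 2) * (m + 1)) ?_
  calc (m + 2) * (m + 1) * (m + 2).choose r
      < (r + 1) * ((m + 2 - r) * (m + 1 - r)) * (m + 2).choose r :=
        Nat.mul_lt_mul_of_pos_right hpoly (Nat.choose_pos (by omega))
    _ = (r + 1) * ((m + 1 - r) * ((m + 2).choose r * (m + 2 - r))) := by ring
    _ = (r + 1) * (m.choose r * (m + 1) * (m + 2)) := by rw [← h₂, h₁]; ring
    _ = _ := by ring

theorem choose_two_two_mul_add_two (r : ℕ) : (2 * r + 2).choose 2 = (r + 1) * (2 * r + 1) := by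
  rw [Nat.choose_two_right, show 2 * r + 2 - 1 = 2 * r + 1 by omega]
  exact Nat.div_eq_of_eq_mul_left two_pos (by ring)

theorem choose_two_two_mul_add_three (r : ℕ) : (2 * r + 3).choose 2 = (r + 1) * (2 * r + 3) := by
  rw [Nat.choose_two_right, show 2 * r + 3 - 1 = 2 * (r + 1) by omega]
  exact Nat.div_eq_of_eq_mul_left two_pos (by ring)

end Binomial

section Matching

variable {V : Type*}

/-- The edges of a matching, each written as an ordered pair: all `2 * #M` entries are distinct. -/
def IsOrderedMatching (M : Finset (V × V)) : Prop :=
  Set.InjOn Prod.fst (M : Set (V × V)) ∧ Set.InjOn Prod.snd (M : Set (V × V)) ∧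
    ∀ p ∈ M, ∀ q ∈ M, p.1 ≠ q.2

def Covers (O : Finset V) (M : Finset (V × V)) : Prop := ∀ p ∈ M, p.1 ∈ O ∨ p.2 ∈ O

instance [DecidableEq V] (O : Finset V) (M : Finset (V × V)) : Decidable (Covers O M) :=
  inferInstanceAs (Decidable (∀ p ∈ M, p.1 ∈ O ∨ p.2 ∈ O))

namespace IsOrderedMatching

variable {M : Finset (V × V)}

theorem injOn_of_forall_eq_fst_or_snd (hM : IsOrderedMatching M) {f : V × V → V}
    (hf : ∀ p ∈ M, f p = p.1 ∨ f p = p.2) : Set.InjOn f M := by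
  intro p hp q hq hpq
  rcases hf p hp with hfp | hfp <;> rcases hf q hq with hfq | hfq <;> rw [hfp, hfq] at hpq
  · exact hM.1 hp hq hpq
  · exact absurd hpq (hM.2.2 p hp q hq)
  · exact absurd hpq.symm (hM.2.2 q hq p hp)
  · exact hM.2.1 hp hq hpq

variable [DecidableEq V]

theorem card_le_of_covers (hM : IsOrderedMatching M) {O : Finset V} (hO : Covers O M) :
    #M ≤ #O :=
  card_le_card_of_injOn (fun p => if p.1 ∈ O then p.1 else p.2)
    (fun p hp => by dsimp only; split_ifs with h; exacts [h, (hO p hp).resolve_left h])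
    (hM.injOn_of_forall_eq_fst_or_snd fun p _ => by split_ifs <;> simp)

variable [Fintype V]

theorem two_mul_card_le (hM : IsOrderedMatching M) : 2 * #M ≤ Fintype.card V := by
  have hdisj : Disjoint (M.image Prod.fst) (M.image Prod.snd) := by
    simp only [disjoint_left, mem_image]
    rintro _ ⟨p, hp, rfl⟩ ⟨q, hq, hqp⟩
    exact hM.2.2 p hp q hq hqp.symm
  calc 2 * #M = #(M.image Prod.fst) + #(M.image Prod.snd) := by
        rw [card_image_of_injOn hM.1, card_image_of_injOn hM.2.1, two_mul]
    _ = #(M.image Prod.fst ∪ M.image Prod.snd) := (card_union_of_disjoint hdisj).symm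
    _ ≤ Fintype.card V := card_le_univ _

theorem card_filter_covers_le (hM : IsOrderedMatching M) (r : ℕ) :
    #{O ∈ powersetCard r (univ : Finset V) | Covers O M} ≤
      2 ^ #M * (Fintype.card V - #M).choose (r - #M) := by
  -- `O` is recovered from the set `S` of pairs whose first entry it contains, which fixes a
  -- transversal `T S ⊆ O` of size `#M`, together with the remaining `r - #M` elements.
  set T : Finset (V × V) → Finset V := fun S => M.image fun p => if p ∈ S then p.1 else p.2
  have hT : ∀ S, #(T S) = #M := fun S => card_image_of_injOn
    (hM.injOn_of_forall_eq_fst_or_snd fun p _ => by split_ifs <;> simp)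
  have hsub : {O ∈ powersetCard r (univ : Finset V) | Covers O M} ⊆
      M.powerset.biUnion fun S => (powersetCard (r - #M) (T S)ᶜ).image (· ∪ T S) := by
    intro O hO
    obtain ⟨⟨-, hOr⟩, hOM⟩ := (mem_filter.1 hO).imp_left mem_powersetCard.1
    have hTO : T (M.filter (·.1 ∈ O)) ⊆ O := by
      intro v hv
      obtain ⟨p, hp, rfl⟩ := mem_image.1 hv
      simp only [mem_filter, hp, true_and]
      split_ifs with h
      exacts [h, (hOM p hp).resolve_left h]
    refine mem_biUnion.2 ⟨M.filter (·.1 ∈ O), mem_powerset.2 (filter_subset _ _),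
      mem_image.2 ⟨O \ T _, mem_powersetCard.2 ⟨?_, ?_⟩, sdiff_union_of_subset hTO⟩⟩
    · exact fun v hv => mem_compl.2 (mem_sdiff.1 hv).2
    · rw [card_sdiff_of_subset hTO, hT, hOr]
  calc _ ≤ _ := card_le_card hsub
    _ ≤ ∑ S ∈ M.powerset, #((powersetCard (r - #M) (T S)ᶜ).image (· ∪ T S)) :=
        card_biUnion_le
    _ ≤ ∑ S ∈ M.powerset, (Fintype.card V - #M).choose (r - #M) := sum_le_sum fun S _ =>
        card_image_le.trans (by rw [card_powersetCard, card_compl, hT])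
    _ = _ := by rw [sum_const, card_powerset, smul_eq_mul]

theorem choose_card_sub_two_le_card_not_covers (hM : IsOrderedMatching M) {p : V × V}
    (hp : p ∈ M) (r : ℕ) :
    (Fintype.card V - 2).choose r ≤ #{O ∈ powersetCard r (univ : Finset V) | ¬Covers O M} := by
  have hsub : powersetCard r {p.1, p.2}ᶜ ⊆
      {O ∈ powersetCard r (univ : Finset V) | ¬Covers O M} := by
    intro O hO
    obtain ⟨hOp, hOr⟩ := mem_powersetCard.1 hO
    refine mem_filter.2 ⟨mem_powersetCard.2 ⟨subset_univ O, hOr⟩, fun hcov => ?_⟩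
    rcases hcov p hp with h | h <;> simpa using hOp h
  calc _ = #(powersetCard r ({p.1, p.2}ᶜ : Finset V)) := by
        rw [card_powersetCard, card_compl, card_pair (hM.2.2 p hp p hp)]
    _ ≤ _ := card_le_card hsub

theorem card_mul_choose_le_succ_mul_card_not_covers (hM : IsOrderedMatching M) {r : ℕ}
    (hn : 2 * r + 2 ≤ Fintype.card V) (hMr : #M ≤ r + 1) :
    #M * (Fintype.card V).choose r ≤
      (r + 1) * #{O ∈ powersetCard r (univ : Finset V) | ¬Covers O M} := by
  have hsplit :=
    card_filter_add_card_filter_not (s := powersetCard r (univ : Finset V)) (Covers · M)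
  rw [card_powersetCard, card_univ] at hsplit
  rcases hMr.lt_or_eq with hMr | hMr
  · have hcovers := hM.card_filter_covers_le r
    have hbinom := succ_mul_two_pow_mul_choose_le hn (a := #M) (by omega)
    have hC : (r + 1 - #M) * (Fintype.card V).choose r + #M * (Fintype.card V).choose r =
        (r + 1) * (Fintype.card V).choose r := by rw [← add_mul]; congr 1; omega
    nlinarith [Nat.mul_le_mul_left (r + 1) hcovers]
  · have hnone : {O ∈ powersetCard r (univ : Finset V) | Covers O M} = ∅ :=
      filter_eq_empty_iff.2 fun O hO hcov => by
        have := hM.card_le_of_covers hcov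
        rw [(mem_powersetCard.1 hO).2] at this
        omega
    rw [hnone, card_empty, zero_add] at hsplit
    rw [hMr, hsplit]

theorem card_mul_choose_lt_succ_mul_card_not_covers (hM : IsOrderedMatching M) {r : ℕ}
    (hr : 2 ≤ r) (hn : 2 * r + 2 ≤ Fintype.card V) (hM₀ : M.Nonempty) (hMr : #M ≤ r) :
    #M * (Fintype.card V).choose r <
      (r + 1) * #{O ∈ powersetCard r (univ : Finset V) | ¬Covers O M} := by
  have hsplit :=
    card_filter_add_card_filter_not (s := powersetCard r (univ : Finset V)) (Covers · M)
  rw [card_powersetCard, card_univ] at hsplit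
  obtain ⟨p, hp⟩ := hM₀
  rcases (Nat.one_le_iff_ne_zero.2 (card_ne_zero_of_mem hp)).eq_or_lt with hM1 | hM2
  · -- a single edge: `2 * C(n-1, r-1)` is not a strict bound, count the `r`-sets avoiding it
    rw [← hM1, one_mul]
    calc _ < (r + 1) * (Fintype.card V - 2).choose r := choose_lt_succ_mul_choose_sub_two hr hn
      _ ≤ _ := Nat.mul_le_mul_left _ (hM.choose_card_sub_two_le_card_not_covers hp r)
  · have hcovers := hM.card_filter_covers_le r
    have hbinom := succ_mul_two_pow_mul_choose_lt hn (a := #M) hM2 hMr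
    have hC : (r + 1 - #M) * (Fintype.card V).choose r + #M * (Fintype.card V).choose r =
        (r + 1) * (Fintype.card V).choose r := by rw [← add_mul]; congr 1; omega
    nlinarith [Nat.mul_le_mul_left (r + 1) hcovers]

end IsOrderedMatching

end Matching

section Colouring

variable {V κ : Type*} [Fintype V] [LinearOrder V] [DecidableEq κ]

def colours (c : V → V → κ) (U : Finset V) : Finset κ := U.offDiag.image fun p => c p.1 p.2

def colourClass (c : V → V → κ) (χ : κ) : Finset (V × V) :=
  {p | p.1 < p.2 ∧ c p.1 p.2 = χ}

variable {c : V → V → κ}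

theorem isOrderedMatching_colourClass (hsymm : ∀ i j, c i j = c j i)
    (hproper : ∀ i j k, i ≠ j → i ≠ k → j ≠ k → c i j ≠ c i k) (χ : κ) :
    IsOrderedMatching (colourClass c χ) := by
  simp only [IsOrderedMatching, colourClass, coe_filter, mem_filter, mem_univ, true_and]
  refine ⟨?_, ?_, ?_⟩
  · rintro p ⟨hp, hpχ⟩ q ⟨hq, hqχ⟩ (h : p.1 = q.1)
    by_contra hpq
    exact hproper p.1 p.2 q.2 hp.ne (h ▸ hq.ne) (fun h' => hpq (Prod.ext h h'))
      (by rw [hpχ, h, hqχ])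
  · rintro p ⟨hp, hpχ⟩ q ⟨hq, hqχ⟩ (h : p.2 = q.2)
    by_contra hpq
    exact hproper p.2 p.1 q.1 hp.ne' (h ▸ hq.ne') (fun h' => hpq (Prod.ext h' h))
      (by rw [hsymm, hpχ, h, hsymm, hqχ])
  · rintro p ⟨hp, hpχ⟩ q ⟨hq, hqχ⟩ h
    exact hproper p.1 p.2 q.1 hp.ne (h ▸ hq.ne') (hq.trans (h ▸ hp)).ne'
      (by rw [hpχ, h, hsymm, hqχ])

theorem mem_colours_compl_iff (hsymm : ∀ i j, c i j = c j i) {O : Finset V} {χ : κ} :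
    χ ∈ colours c Oᶜ ↔ ¬Covers O (colourClass c χ) := by
  simp only [colours, Covers, colourClass, mem_image, mem_offDiag, mem_compl, mem_filter,
    mem_univ, true_and, not_forall, not_or, exists_prop]
  constructor
  · rintro ⟨⟨v, w⟩, ⟨hv, hw, hvw⟩, rfl⟩
    rcases lt_or_gt_of_ne hvw with h | h
    · exact ⟨(v, w), ⟨h, rfl⟩, hv, hw⟩
    · exact ⟨(w, v), ⟨h, hsymm w v⟩, hw, hv⟩
  · rintro ⟨p, ⟨hp, rfl⟩, h₁, h₂⟩
    exact ⟨p, ⟨h₁, h₂, hp.ne⟩, rfl⟩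

theorem colourClass_nonempty (hsymm : ∀ i j, c i j = c j i) {χ : κ}
    (hχ : χ ∈ colours c univ) :
    (colourClass c χ).Nonempty := by
  rw [← compl_empty, mem_colours_compl_iff hsymm] at hχ
  simp only [Covers, not_forall] at hχ
  obtain ⟨p, hp, -⟩ := hχ
  exact ⟨p, hp⟩

theorem sum_card_colourClass :
    ∑ χ ∈ colours c univ, #(colourClass c χ) = (Fintype.card V).choose 2 := by
  rw [← Fintype.card_product_filter_lt,
    card_eq_sum_card_fiberwise (f := fun p => c p.1 p.2) (t := colours c univ)]
  · simp only [colourClass, filter_filter]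
  · intro p hp
    exact mem_image_of_mem _ (by simpa using (mem_filter.1 hp).2.ne)

theorem sum_card_colours_compl (hsymm : ∀ i j, c i j = c j i) (r : ℕ) :
    ∑ O ∈ powersetCard r univ, #(colours c Oᶜ) =
      ∑ χ ∈ colours c univ, #{O ∈ powersetCard r univ | ¬Covers O (colourClass c χ)} := by
  calc _ = ∑ O ∈ powersetCard r univ,
        #((colours c univ).bipartiteAbove (fun O χ => χ ∈ colours c Oᶜ) O) := by
        refine sum_congr rfl fun O _ => ?_
        rw [bipartiteAbove, filter_mem_eq_inter, inter_eq_right.2]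
        exact image_subset_image (offDiag_mono (subset_univ _))
    _ = ∑ χ ∈ colours c univ,
        #((powersetCard r univ).bipartiteBelow (fun O χ => χ ∈ colours c Oᶜ) χ) :=
      sum_card_bipartiteAbove_eq_sum_card_bipartiteBelow _
    _ = _ := by simp only [bipartiteBelow, mem_colours_compl_iff hsymm]

theorem exists_card_colourClass_lt {r : ℕ} (hn : Fintype.card V = 2 * r + 2)
    (hcol : Fintype.card V ≤ #(colours c univ)) :
    ∃ χ ∈ colours c univ, #(colourClass c χ) < r + 1 := by
  refine exists_lt_of_sum_lt ?_
  rw [sum_card_colourClass, sum_const, smul_eq_mul, hn, choose_two_two_mul_add_two]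
  calc (r + 1) * (2 * r + 1) < (2 * r + 2) * (r + 1) := by nlinarith
    _ ≤ _ := Nat.mul_le_mul_right _ (hn ▸ hcol)

theorem lt_sum_card_colours_compl (hsymm : ∀ i j, c i j = c j i)
    (hproper : ∀ i j k, i ≠ j → i ≠ k → j ≠ k → c i j ≠ c i k) {r : ℕ}
    (hV : 5 ≤ Fintype.card V) (hr : Fintype.card V = 2 * r + 2 ∨ Fintype.card V = 2 * r + 3)
    (hcol : Fintype.card V ≤ #(colours c univ)) :
    (Fintype.card V - 1) * (Fintype.card V).choose r <
      ∑ O ∈ powersetCard r univ, #(colours c Oᶜ) := by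
  set n := Fintype.card V
  set C := n.choose r
  have hC : 0 < C := Nat.choose_pos (by omega)
  have hM := isOrderedMatching_colourClass hsymm hproper
  have hle : ∀ χ ∈ colours c univ, #(colourClass c χ) * C ≤
      (r + 1) * #{O ∈ powersetCard r univ | ¬Covers O (colourClass c χ)} := fun χ _ =>
    (hM χ).card_mul_choose_le_succ_mul_card_not_covers (by omega)
      (by have := (hM χ).two_mul_card_le; omega)
  have hsum : ∑ χ ∈ colours c univ, #(colourClass c χ) * C = n.choose 2 * C := by
    rw [← sum_mul, sum_card_colourClass]
  refine Nat.lt_of_mul_lt_mul_left (a := r + 1) ?_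
  rw [sum_card_colours_compl hsymm, mul_sum]
  rcases hr with hn | hn
  · obtain ⟨χ, hχ, hsmall⟩ := exists_card_colourClass_lt hn hcol
    have hchoose : n.choose 2 = (r + 1) * (n - 1) := by
      rw [hn, choose_two_two_mul_add_two, show 2 * r + 2 - 1 = 2 * r + 1 by omega]
    calc (r + 1) * ((n - 1) * C) = ∑ χ ∈ colours c univ, #(colourClass c χ) * C := by
          rw [hsum, hchoose, mul_assoc]
      _ < _ := sum_lt_sum hle ⟨χ, hχ, (hM χ).card_mul_choose_lt_succ_mul_card_not_covers
          (by omega) (by omega) (colourClass_nonempty hsymm hχ) (by omega)⟩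
  · have hchoose : n.choose 2 = (r + 1) * n := by rw [hn, choose_two_two_mul_add_three]
    calc (r + 1) * ((n - 1) * C) < (r + 1) * (n * C) := by gcongr; omega
      _ = ∑ χ ∈ colours c univ, #(colourClass c χ) * C := by rw [hsum, hchoose, mul_assoc]
      _ ≤ _ := sum_le_sum hle

theorem exists_card_eq_le_card_colours (hsymm : ∀ i j, c i j = c j i)
    (hproper : ∀ i j k, i ≠ j → i ≠ k → j ≠ k → c i j ≠ c i k)
    (hV : 5 ≤ Fintype.card V) (hcol : Fintype.card V ≤ #(colours c univ)) :
    ∃ U : Finset V, #U = (Fintype.card V + 3) / 2 ∧ Fintype.card V ≤ #(colours c U) := by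
  set r := Fintype.card V - (Fintype.card V + 3) / 2
  obtain ⟨O, hO, hOcol⟩ :
      ∃ O ∈ powersetCard r univ, Fintype.card V - 1 < #(colours c Oᶜ) := by
    refine exists_lt_of_sum_lt ?_
    rw [sum_const, card_powersetCard, card_univ, smul_eq_mul, mul_comm]
    exact lt_sum_card_colours_compl hsymm hproper hV (by omega) hcol
  refine ⟨Oᶜ, ?_, by omega⟩
  rw [card_compl, (mem_powersetCard.1 hO).2]
  omega

end Colouring

theorem stmt7 (n : ℕ) (hn : 5 ≤ n) (c : Fin n → Fin n → ℕ)
    (hsymm : ∀ i j, c i j = c j i)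
    (hproper : ∀ i j k : Fin n, i ≠ j → i ≠ k → j ≠ k → c i j ≠ c i k)
    (hcolours : n ≤ (((univ ×ˢ univ : Finset (Fin n × Fin n)).filter
        fun p => p.1 ≠ p.2).image fun p => c p.1 p.2).card) :
    ∃ U : Finset (Fin n), U.card = (n + 3) / 2 ∧
      n ≤ (((U ×ˢ U).filter fun p => p.1 ≠ p.2).image fun p => c p.1 p.2).card := by
  have hoff (U : Finset (Fin n)) : (U ×ˢ U).filter (fun p => p.1 ≠ p.2) = U.offDiag := by
    ext; simp [and_assoc]
  simp only [hoff] at hcolours ⊢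
  simpa [colours] using exists_card_eq_le_card_colours hsymm hproper (by simpa using hn)
    (by simpa [colours] using hcolours)
end

section
/- Let A be a finite subset of an abelian group G and let k satisfy 2 ≤ k ≤ |A| − 2. Then |k∧A| ≥ |A|, unless k ∈ {2, |A| − 2} and A is a coset of an elementary 2-subgroup of G. -/
/-!
If `C ⊆ A` is a `k`-set, `x ∈ A \ C`, `y ∈ C`, and `x + y = b + c` with `b ∉ C ∋ c` only for
`(b, c) = (x, y)`, then `∑ C` together with the sums obtained from `C` by an exchange involving
`x` or `y` are `|A|` distinct elements of `k∧A`. Such a `C = {y} ∪ D` exists, with `D` a union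
of orbits of the reflection `u ↦ x + y - u` on `A \ {x, y}`, unless `k` is even and every such
reflection permutes `A \ {x, y}` without fixed points. That rigidity forces `A = g + H` with `H`
an elementary 2-group, and then for `3 ≤ k ≤ |A| - 3` (using the symmetry `k ↔ |A| - k`) every
element of `k • g + H` is a sum of `k` distinct elements of `A`.
-/

open Finset Pointwise

lemma Finset.maps_erase_erase {α : Type*} [DecidableEq α] {σ : α → α} {s : Finset α}
    (hmaps : ∀ u ∈ s, σ u ∈ s) (hinv : ∀ u ∈ s, σ (σ u) = u) {u : α} (hu : u ∈ s) :
    ∀ v ∈ (s.erase u).erase (σ u), σ v ∈ (s.erase u).erase (σ u) := by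
  simp only [mem_erase]
  rintro v ⟨hvσu, hvu, hv⟩
  refine ⟨fun h => hvu ?_, fun h => hvσu ?_, hmaps v hv⟩
  · rw [← hinv v hv, h, hinv u hu]
  · rw [← h, hinv v hv]

lemma Finset.exists_invariant_subset_card_eq {α : Type*} [DecidableEq α] {σ : α → α}
    {s : Finset α} (hmaps : ∀ u ∈ s, σ u ∈ s) (hinv : ∀ u ∈ s, σ (σ u) = u) {m : ℕ}
    (hm : m ≤ s.card) (hfix : Even m ∨ ∃ u ∈ s, σ u = u) :
    ∃ t ⊆ s, t.card = m ∧ ∀ u ∈ t, σ u ∈ t := by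
  induction m using Nat.strong_induction_on generalizing s with
  | _ m ih =>
  by_cases hpair : 2 ≤ m ∧ ∃ u ∈ s, σ u ≠ u
  · obtain ⟨h2m, u, hu, hσu⟩ := hpair
    have hσus : σ u ∈ s.erase u := mem_erase.2 ⟨hσu, hmaps u hu⟩
    obtain ⟨t, hts, htm, ht⟩ := ih (m - 2) (by omega) (maps_erase_erase hmaps hinv hu)
      (fun v hv => hinv v (mem_of_mem_erase (mem_of_mem_erase hv)))
      (by rw [card_erase_of_mem hσus, card_erase_of_mem hu]; omega)
      (hfix.imp (fun h => (Nat.even_sub h2m).2 (iff_of_true h even_two)) fun ⟨w, hw, hσw⟩ => ⟨w, by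
        refine mem_erase.2 ⟨?_, mem_erase.2 ⟨?_, hw⟩⟩ <;> rintro rfl
        · exact hσu (by rw [← hσw, hinv u hu])
        · exact hσu hσw, hσw⟩)
    have hσut : σ u ∉ t := fun h => (mem_erase.1 (hts h)).1 rfl
    have hut : u ∉ insert (σ u) t := by
      rw [mem_insert, not_or]
      exact ⟨Ne.symm hσu, fun h => (mem_erase.1 (mem_of_mem_erase (hts h))).1 rfl⟩
    refine ⟨insert u (insert (σ u) t), ?_, ?_, ?_⟩
    · exact insert_subset hu (insert_subset (hmaps u hu)
        (hts.trans ((erase_subset _ _).trans (erase_subset _ _))))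
    · rw [card_insert_of_notMem hut, card_insert_of_notMem hσut, htm]; omega
    · simp only [mem_insert]
      rintro v (rfl | rfl | hv)
      · exact Or.inr (Or.inl rfl)
      · exact Or.inl (hinv u hu)
      · exact Or.inr (Or.inr (ht v hv))
  · rcases Nat.lt_or_ge m 2 with hm2 | hm2
    · interval_cases m
      · exact ⟨∅, empty_subset s, rfl, by simp⟩
      · obtain ⟨u, hu, hσu⟩ := hfix.resolve_left (by decide)
        exact ⟨{u}, singleton_subset_iff.2 hu, rfl, by simp [hσu]⟩
    · have hfixed : ∀ u ∈ s, σ u = u := by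
        by_contra! h; exact hpair ⟨hm2, h⟩
      obtain ⟨t, hts, htm⟩ := exists_subset_card_eq hm
      exact ⟨t, hts, htm, fun u hu => by rwa [hfixed u (hts hu)]⟩

section nSum

variable {G : Type*} [AddCommGroup G] [DecidableEq G]

lemma mem_nSum {k : ℕ} {A : Finset G} {z : G} :
    z ∈ nSum k A ↔ ∃ B ⊆ A, B.card = k ∧ B.sum id = z := by
  simp [nSum, and_assoc]

lemma sum_mem_nSum {k : ℕ} {A B : Finset G} (hB : B ⊆ A) (hBk : B.card = k) :
    B.sum id ∈ nSum k A :=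
  mem_nSum.2 ⟨B, hB, hBk, rfl⟩

lemma sum_sub_add_mem_nSum {k : ℕ} {A C : Finset G} (hC : C ⊆ A) (hCk : C.card = k)
    {b c : G} (hb : b ∈ A \ C) (hc : c ∈ C) : C.sum id - c + b ∈ nSum k A := by
  obtain ⟨hbA, hbC⟩ := mem_sdiff.1 hb
  have hbC' : b ∉ C.erase c := fun h => hbC (mem_of_mem_erase h)
  have hk : 0 < k := hCk ▸ card_pos.2 ⟨c, hc⟩
  have := sum_mem_nSum (k := k) (insert_subset hbA ((erase_subset c C).trans hC))
    (by rw [card_insert_of_notMem hbC', card_erase_of_mem hc, hCk]; omega)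
  rwa [sum_insert hbC', sum_erase_eq_sub hc, id, add_comm] at this

lemma vadd_nSum_subset (k : ℕ) (a : G) (A : Finset G) :
    (k • a) +ᵥ nSum k A ⊆ nSum k (a +ᵥ A) := by
  intro z hz
  obtain ⟨w, hw, rfl⟩ := mem_vadd_finset.1 hz
  obtain ⟨T, hTA, hTk, rfl⟩ := mem_nSum.1 hw
  refine mem_nSum.2
    ⟨a +ᵥ T, vadd_finset_subset_vadd_finset hTA, by rw [card_vadd_finset, hTk], ?_⟩
  rw [vadd_finset_def, sum_image fun _ _ _ _ h => vadd_left_cancel a h]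
  simp only [vadd_eq_add, id_eq]
  rw [sum_add_distrib, sum_const, hTk]

lemma card_nSum_le_card_nSum_card_sub (k : ℕ) (A : Finset G) :
    (nSum k A).card ≤ (nSum (A.card - k) A).card := by
  refine card_le_card_of_injOn (A.sum id - ·) (fun z hz => ?_)
    fun _ _ _ _ h => sub_right_injective h
  obtain ⟨T, hTA, hTk, rfl⟩ := mem_nSum.1 hz
  simp only [mem_coe, ← sum_sdiff_eq_sub hTA]
  exact sum_mem_nSum sdiff_subset (by rw [card_sdiff_of_subset hTA, hTk])

lemma card_le_card_nSum_of_unique_add {k : ℕ} {A C : Finset G} (hC : C ⊆ A) (hCk : C.card = k)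
    {x y : G} (hx : x ∈ A \ C) (hy : y ∈ C)
    (huniq : ∀ b ∈ A \ C, ∀ c ∈ C, b + c = x + y → b = x ∧ c = y) :
    A.card ≤ (nSum k A).card := by
  set s := C.sum id
  let F₁ := (A \ C).image (s - y + ·)
  let F₂ := C.image (s - · + x)
  have hF₁ : F₁.card = A.card - k := by
    rw [card_image_of_injective _ (add_right_injective _), card_sdiff_of_subset hC, hCk]
  have hF₂ : F₂.card = k := by
    rw [card_image_of_injective _ fun c c' h => sub_right_injective (add_left_injective x h), hCk]
  have hinter : (F₁ ∩ F₂).card ≤ 1 := by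
    suffices ∀ w ∈ F₁ ∩ F₂, w = s - y + x from
      card_le_one.2 fun w hw w' hw' => (this w hw).trans (this w' hw').symm
    simp only [F₁, F₂, mem_inter, mem_image]
    rintro _ ⟨⟨b, hb, rfl⟩, c, hc, hbc⟩
    obtain ⟨rfl, -⟩ := huniq b hb c hc (by grind)
    rfl
  have hs : s ∉ F₁ ∪ F₂ := by
    simp only [F₁, F₂, mem_union, mem_image, not_or, not_exists, not_and]
    refine ⟨fun b hb h => (mem_sdiff.1 hb).2 ?_, fun c hc h => (mem_sdiff.1 hx).2 ?_⟩
    · rwa [show b = y by grind]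
    · rwa [show x = c by grind]
  have hsub : insert s (F₁ ∪ F₂) ⊆ nSum k A := by
    refine insert_subset (sum_mem_nSum hC hCk) (union_subset ?_ ?_) <;>
      intro w hw <;> obtain ⟨_, h, rfl⟩ := mem_image.1 hw
    · exact sum_sub_add_mem_nSum hC hCk h hy
    · exact sum_sub_add_mem_nSum hC hCk hx h
  have hkA : k ≤ A.card := hCk ▸ card_le_card hC
  have := card_union_add_card_inter F₁ F₂
  have := card_le_card hsub
  rw [card_insert_of_notMem hs] at this
  omega

def ReflectionClosed (A : Finset G) : Prop :=
  ∀ x ∈ A, ∀ y ∈ A, x ≠ y → ∀ u ∈ A, u ≠ x → u ≠ y → x + y - u ∈ A ∧ x + y - u ≠ u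

lemma card_le_card_nSum_of_pair {k : ℕ} {A : Finset G} {x y : G} (hx : x ∈ A) (hy : y ∈ A)
    (hxy : x ≠ y) (hk : 1 ≤ k) (hkA : k < A.card)
    (h : Odd k ∨ ∃ u ∈ A, u ≠ x ∧ u ≠ y ∧ ¬(x + y - u ∈ A ∧ x + y - u ≠ u)) :
    A.card ≤ (nSum k A).card := by
  set U := (A.erase x).erase y
  have hU : ∀ v, v ∈ U ↔ v ∈ A ∧ v ≠ x ∧ v ≠ y := fun v => by
    simp only [U, mem_erase]; tauto
  -- the reflection, made to fix the points it would send out of `U`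
  let σ := fun u => if x + y - u ∈ U then x + y - u else u
  have hmaps : ∀ u ∈ U, σ u ∈ U := fun u hu => by
    simp only [σ]; split_ifs with h <;> assumption
  have hinv : ∀ u ∈ U, σ (σ u) = u := fun u hu => by
    by_cases h : x + y - u ∈ U <;> simp [σ, h, hu]
  obtain ⟨D, hDU, hDk, hD⟩ := exists_invariant_subset_card_eq hmaps hinv (m := k - 1)
    (by rw [card_erase_of_mem (mem_erase.2 ⟨hxy.symm, hy⟩), card_erase_of_mem hx]; omega)
    (h.imp (fun h => Nat.Odd.sub_odd h odd_one) fun ⟨u, hu, hux, huy, hu'⟩ =>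
      ⟨u, (hU u).2 ⟨hu, hux, huy⟩, by simp only [σ]; split_ifs <;> grind⟩)
  have hyD : y ∉ D := fun h => ((hU y).1 (hDU h)).2.2 rfl
  have hxC : x ∉ insert y D := by
    rw [mem_insert, not_or]; exact ⟨hxy, fun h => ((hU x).1 (hDU h)).2.1 rfl⟩
  refine card_le_card_nSum_of_unique_add (C := insert y D)
    (insert_subset hy (hDU.trans fun v hv => ((hU v).1 hv).1))
    (by rw [card_insert_of_notMem hyD, hDk]; omega) (mem_sdiff.2 ⟨hx, hxC⟩) (mem_insert_self y D)
    fun b hb c hc hbc => ?_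
  obtain ⟨hbA, hbC⟩ := mem_sdiff.1 hb
  rcases mem_insert.1 hc with rfl | hcD
  · exact ⟨add_right_cancel hbc, rfl⟩
  · have hb' : b = x + y - c := eq_sub_of_add_eq hbc
    have hcU := (hU c).1 (hDU hcD)
    have hbU : b ∈ U := (hU b).2 ⟨hbA, by rintro rfl; exact hcU.2.2 (add_left_cancel hbc),
      by rintro rfl; exact hbC (mem_insert_self b D)⟩
    have : σ c = b := by simp only [σ]; rw [← hb', if_pos hbU]
    exact absurd (mem_insert_of_mem (this ▸ hD c hcD)) hbC

lemma card_le_card_nSum_of_not_reflectionClosed {k : ℕ} {A : Finset G} (hk : 1 ≤ k)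
    (hkA : k < A.card) (h : Odd k ∨ ¬ReflectionClosed A) : A.card ≤ (nSum k A).card := by
  rcases h with hodd | hA
  · obtain ⟨x, hx, y, hy, hxy⟩ := one_lt_card.1 (by omega : 1 < A.card)
    exact card_le_card_nSum_of_pair hx hy hxy hk hkA (Or.inl hodd)
  · simp only [ReflectionClosed, not_forall] at hA
    obtain ⟨x, hx, y, hy, hxy, u, hu, hux, huy, hu'⟩ := hA
    exact card_le_card_nSum_of_pair hx hy hxy hk hkA (Or.inr ⟨u, hu, hux, huy, hu'⟩)

lemma ReflectionClosed.add_self_eq {A : Finset G} (hA : ReflectionClosed A) {a : G} (ha : a ∈ A)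
    (h3 : 3 ≤ A.card) {u : G} (hu : u ∈ A) : u + u = a + a := by
  -- all `u ≠ a` have the same double, because `(a + v - u) + (a + u - v) - a = a`
  have hdouble : ∀ u ∈ A, ∀ v ∈ A, u ≠ a → v ≠ a → u ≠ v → u + u = v + v := by
    intro u hu v hv hua hva huv
    have hp := hA a ha v hv hva.symm u hu hua huv
    have hq := hA a ha u hu hua.symm v hv hva huv.symm
    by_contra hne
    have := hA _ hp.1 _ hq.1 (by grind) a ha (by grind) (by grind)
    exact this.2 (by abel)
  obtain rfl | hua := eq_or_ne u a
  · rfl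
  obtain ⟨v, hv⟩ : ((A.erase a).erase u).Nonempty := by
    rw [← card_pos, card_erase_of_mem (mem_erase.2 ⟨hua, hu⟩), card_erase_of_mem ha]; omega
  simp only [mem_erase] at hv
  obtain ⟨hvu, hva, hv⟩ := hv
  have hr := hA u hu v hv hvu.symm a ha (Ne.symm hua) (Ne.symm hva)
  have h₁ := hdouble _ hr.1 u hu hr.2 hua (by grind)
  have h₂ := hdouble v hv u hu hva hua hvu
  grind

lemma ReflectionClosed.is2Coset {A : Finset G} (hA : ReflectionClosed A) (h3 : 3 ≤ A.card) :
    Is2Coset A := by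
  obtain ⟨a, ha⟩ : A.Nonempty := card_pos.1 (by omega)
  have h2 : ∀ z, a + z ∈ A → z + z = 0 := fun z hz => by
    have := hA.add_self_eq ha h3 hz; grind
  let H : AddSubgroup G :=
    { carrier := {z | a + z ∈ A}
      zero_mem' := by simpa using ha
      add_mem' := fun {z w} hz hw => by
        simp only [Set.mem_ofPred_eq] at hz hw ⊢
        obtain rfl | hz0 := eq_or_ne z 0; · simpa using hw
        obtain rfl | hw0 := eq_or_ne w 0; · simpa using hz
        obtain rfl | hzw := eq_or_ne z w; · simpa [h2 z hz] using ha
        have := (hA _ hz _ hw (by simpa using hzw) a ha (by simpa using hz0)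
          (by simpa using hw0)).1
        rwa [show a + z + (a + w) - a = a + (z + w) by abel] at this
      neg_mem' := fun {z} hz => by
        simp only [Set.mem_ofPred_eq] at hz ⊢
        rwa [neg_eq_of_add_eq_zero_left (h2 z hz)] }
  refine ⟨H, a, fun z hz => h2 z hz, ?_⟩
  ext w
  simp only [Set.mem_vadd_set, SetLike.mem_coe, vadd_eq_add]
  exact ⟨fun hw => ⟨w - a, by simpa [H] using hw, by abel⟩, fun ⟨z, hz, hzw⟩ => hzw ▸ hz⟩

lemma exists_subset_card_eq_sum_ne {B : Finset G} {m : ℕ} (hm : 0 < m) (hmB : m < B.card)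
    (x : G) : ∃ T ⊆ B, T.card = m ∧ T.sum id ≠ x := by
  obtain ⟨T, hTB, hTm⟩ := exists_subset_card_eq hmB.le
  by_cases hT : T.sum id ≠ x
  · exact ⟨T, hTB, hTm, hT⟩
  obtain ⟨t, ht⟩ : T.Nonempty := card_pos.1 (hTm ▸ hm)
  obtain ⟨t', ht'⟩ : (B \ T).Nonempty := by
    rw [← card_pos, card_sdiff_of_subset hTB]; omega
  obtain ⟨ht'B, ht'T⟩ := mem_sdiff.1 ht'
  have ht'e : t' ∉ T.erase t := fun h => ht'T (mem_of_mem_erase h)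
  refine ⟨insert t' (T.erase t), insert_subset ht'B ((erase_subset t T).trans hTB), ?_, ?_⟩
  · rw [card_insert_of_notMem ht'e, card_erase_of_mem ht]; omega
  · rw [sum_insert ht'e, sum_erase_eq_sub ht, not_not.1 hT, id]
    rintro h
    exact ht'T (by rwa [show t' = t by grind])

/-- Complete `k - 2` elements of sum `s ≠ x` by a pair `e, x + s + e`, whose sum with them is `x`
since `2 • z = 0`; `e` avoids the `2 (k - 2)` values that would make the pair collide with them. -/
lemma mem_nSum_of_coe_eq_addSubgroup {H : AddSubgroup G} (hH : ∀ z ∈ H, z + z = 0)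
    {B : Finset G} (hB : (B : Set G) = H) {k : ℕ} (hk : 3 ≤ k) (hkB : 2 * k ≤ B.card + 3)
    {x : G} (hx : x ∈ B) : x ∈ nSum k B := by
  have hmem : ∀ z, z ∈ B ↔ z ∈ H := fun z => by rw [← mem_coe, hB, SetLike.mem_coe]
  obtain ⟨T, hTB, hTk, hsx⟩ :=
    exists_subset_card_eq_sum_ne (B := B) (m := k - 2) (by omega) (by omega) x
  set s := T.sum id
  have hs : s ∈ B := (hmem s).2 (H.sum_mem fun t ht => (hmem t).1 (hTB ht))
  obtain ⟨e, he⟩ : (B \ (T ∪ ((x + s) +ᵥ T))).Nonempty := by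
    have := card_union_le T ((x + s) +ᵥ T)
    rw [card_vadd_finset] at this
    have := le_card_sdiff (T ∪ ((x + s) +ᵥ T)) B
    rw [← card_pos]; omega
  simp only [mem_sdiff, mem_union, not_or] at he
  obtain ⟨heB, heT, hexs⟩ := he
  set d := x + s + e with hd
  have hxx := hH x ((hmem x).1 hx)
  have hss := hH s ((hmem s).1 hs)
  have hee := hH e ((hmem e).1 heB)
  have hdT : d ∉ T := fun h => hexs (mem_vadd_finset.2 ⟨d, h, by
    rw [vadd_eq_add, show x + s + d = (x + x) + (s + s) + e by rw [hd]; abel, hxx, hss,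
      zero_add, zero_add]⟩)
  have hed : e ∉ insert d T := by
    rw [mem_insert, not_or]; exact ⟨fun h => hsx (by grind), heT⟩
  have hdB : d ∈ B :=
    (hmem d).2 (H.add_mem (H.add_mem ((hmem x).1 hx) ((hmem s).1 hs)) ((hmem e).1 heB))
  convert sum_mem_nSum (k := k) (insert_subset heB (insert_subset hdB hTB))
    (by rw [card_insert_of_notMem hed, card_insert_of_notMem hdT, hTk]; omega) using 1
  rw [sum_insert hed, sum_insert hdT, id, id,
    show e + (d + s) = x + (e + e) + (s + s) by rw [hd]; abel, hee, hss, add_zero, add_zero]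

lemma Is2Coset.card_le_card_nSum {A : Finset G} (hA : Is2Coset A) {k : ℕ} (hk : 3 ≤ k)
    (hkA : 2 * k ≤ A.card + 3) : A.card ≤ (nSum k A).card := by
  obtain ⟨H, g, hH, hAH⟩ := hA
  set B := -g +ᵥ A
  have hB : (B : Set G) = H := by rw [coe_vadd_finset, hAH, neg_vadd_vadd]
  have hBA : g +ᵥ B = A := vadd_neg_vadd g A
  calc A.card = B.card := (card_vadd_finset _ _).symm
    _ ≤ (nSum k B).card := card_le_card fun x hx =>
        mem_nSum_of_coe_eq_addSubgroup hH hB hk (by rwa [card_vadd_finset]) hx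
    _ = ((k • g) +ᵥ nSum k B).card := (card_vadd_finset _ _).symm
    _ ≤ (nSum k A).card := hBA ▸ card_le_card (vadd_nSum_subset k g B)

end nSum

theorem stmt11 {G : Type*} [AddCommGroup G] [DecidableEq G] (A : Finset G) (k : ℕ)
    (hk2 : 2 ≤ k) (hk : k ≤ A.card - 2)
    (hexc : ¬ ((k = 2 ∨ k = A.card - 2) ∧ Is2Coset A)) :
    A.card ≤ (nSum k A).card := by
  by_cases hgen : Odd k ∨ ¬ReflectionClosed A
  · exact card_le_card_nSum_of_not_reflectionClosed (by omega) (by omega) hgen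
  have hcoset : Is2Coset A := (not_not.1 (not_or.1 hgen).2).is2Coset (by omega)
  have hk3 : 3 ≤ k ∧ k + 3 ≤ A.card := by
    have : k ≠ 2 ∧ k ≠ A.card - 2 := by tauto
    omega
  rcases le_total (2 * k) A.card with hhalf | hhalf
  · exact hcoset.card_le_card_nSum hk3.1 (by omega)
  · calc A.card ≤ (nSum (A.card - k) A).card := hcoset.card_le_card_nSum (by omega) (by omega)
      _ ≤ (nSum (A.card - (A.card - k)) A).card := card_nSum_le_card_nSum_card_sub _ A
      _ = (nSum k A).card := by rw [Nat.sub_sub_self (by omega)]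
end

section
/- Let p be a prime and A ⊆ ℤ/pℤ a finite set with 2 ≤ k ≤ |A| − 2. Then |k∧A| ≥ min{p, |A|}, and if p > 2 then |k∧A| ≥ |A|. -/
/-!
Split `A` into a `k`-subset `B` and its complement `C = A \ B`. Swapping one `b ∈ B` for one
`c ∈ C` turns `∑ B` into `∑ B + (c - b)`, so `nSum k A` contains `∑ B` and the translate
`∑ B +ᵥ (C - B)`, which misses `∑ B` because `C` and `B` are disjoint. In `ℤ/pℤ`,
Cauchy–Davenport gives `|C - B| ≥ min p (|A| - 1) = |A| - 1`.
-/

open Finset Pointwise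

section AddCommGroup

variable {G : Type*} [AddCommGroup G] [DecidableEq G] {A B : Finset G}

lemma sum_mem_nSum_s18 (hBA : B ⊆ A) : B.sum id ∈ nSum #B A :=
  mem_image_of_mem _ (mem_powersetCard.2 ⟨hBA, rfl⟩)

lemma sum_add_sub_mem_nSum {b c : G} (hBA : B ⊆ A) (hb : b ∈ B) (hc : c ∈ A \ B) :
    B.sum id + (c - b) ∈ nSum #B A := by
  obtain ⟨hcA, hcB⟩ := mem_sdiff.1 hc
  have hce : c ∉ B.erase b := fun h => hcB (mem_of_mem_erase h)
  refine mem_image.2 ⟨insert c (B.erase b), mem_powersetCard.2 ⟨?_, ?_⟩, ?_⟩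
  · exact insert_subset hcA ((erase_subset b B).trans hBA)
  · rw [card_insert_of_notMem hce, card_erase_add_one hb]
  · rw [sum_insert hce, ← sum_erase_add B id hb]
    simp only [id]
    abel

lemma card_sdiff_sub_lt_card_nSum (hBA : B ⊆ A) : #(A \ B - B) < #(nSum #B A) := by
  set s := B.sum id
  have hsub : insert s (s +ᵥ (A \ B - B)) ⊆ nSum #B A := by
    refine insert_subset (sum_mem_nSum_s18 hBA) ?_
    intro x hx
    obtain ⟨y, hy, rfl⟩ := mem_vadd_finset.1 hx
    obtain ⟨c, hc, b, hb, rfl⟩ := mem_sub.1 hy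
    exact sum_add_sub_mem_nSum hBA hb hc
  have hs : s ∉ s +ᵥ (A \ B - B) := by
    simpa [mem_vadd_finset] using disjoint_sdiff_self_left (x := B) (y := A)
  calc #(A \ B - B) < #(insert s (s +ᵥ (A \ B - B))) := by
        rw [card_insert_of_notMem hs, card_vadd_finset]; omega
    _ ≤ #(nSum #B A) := card_le_card hsub

end AddCommGroup

theorem ZMod.card_le_card_nSum {p : ℕ} (hp : p.Prime) {A : Finset (ZMod p)} {k : ℕ}
    (hk : 0 < k) (hkA : k < #A) : #A ≤ #(nSum k A) := by
  have : NeZero p := ⟨hp.ne_zero⟩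
  obtain ⟨B, hBA, rfl⟩ := exists_subset_card_eq hkA.le
  have hAp : #A ≤ p := by simpa using card_le_univ A
  have hCD := ZMod.cauchy_davenport hp (s := A \ B) (t := -B)
    (card_pos.1 (by rw [card_sdiff_of_subset hBA]; omega)) (card_pos.1 (by rw [card_neg]; omega))
  rw [card_neg, card_sdiff_of_subset hBA, ← sub_eq_add_neg] at hCD
  have hlt := card_sdiff_sub_lt_card_nSum hBA
  omega

theorem stmt18 (p : ℕ) (hp : p.Prime) (A : Finset (ZMod p)) (k : ℕ)
    (hk2 : 2 ≤ k) (hk : k ≤ A.card - 2) :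
    min p A.card ≤ (nSum k A).card ∧ (2 < p → A.card ≤ (nSum k A).card) := by
  have hA := ZMod.card_le_card_nSum hp (by omega) (by omega : k < #A)
  exact ⟨min_le_of_right_le hA, fun _ => hA⟩
end
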